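/- arXiv:1605.01710 — 10 statements merged into one kernel-verified Lean document; each statement's English description precedes it below -/
import Mathlib

section
/- Let x^(k), v^(k), u^(k) be Plug-and-Play ADMM iterates with monotone parameter update ρ_{k+1} = γ ρ_k for all k ≥ 0, where ρ_0 > 0 and γ > 1, for a differentiable f with gradient bounded by L√n and a bounded denoiser with constant C ≥ 0. Then there exist x*, v*, u* ∈ ℝ^n such that ‖x^(k) − x*‖₂ → 0, ‖v^(k) − v*‖₂ → 0 and ‖u^(k) − u*‖₂ → 0 as k → ∞. -/
/-!
The `x`-update is a proximal step, so its first-order optimality condition reads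
`ρₖ (x⁽ᵏ⁺¹⁾ - (v⁽ᵏ⁾ - u⁽ᵏ⁾)) = -∇f(x⁽ᵏ⁺¹⁾)`, and the bounded gradient makes this residual `O(1/ρₖ)`.
The `u`-update gives `u⁽ᵏ⁺¹⁾ = z - D_σ(z)` with `z = x⁽ᵏ⁺¹⁾ + u⁽ᵏ⁾`, so the bounded denoiser makes
`u⁽ᵏ⁺¹⁾` of size `O(σₖ) = O(1/√ρₖ)`. Since `ρₖ` grows geometrically, both are summable; as
`v⁽ᵏ⁺¹⁾ - v⁽ᵏ⁾` is their difference, `v` is Cauchy, `u → 0`, and `x` has the same limit as `v`.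
-/

open Filter Topology InnerProductSpace

section Proximal

variable {E : Type*} [NormedAddCommGroup E] [InnerProductSpace ℝ E] [CompleteSpace E]
  {f : E → ℝ} {ρ : ℝ} {a c : E}

theorem gradient_eq_smul_sub_of_isLocalMin_add_sq (hf : DifferentiableAt ℝ f a)
    (hmin : IsLocalMin (fun z => f z + ρ / 2 * ‖z - c‖ ^ 2) a) :
    gradient f a = ρ • (c - a) := by
  have hquad : HasFDerivAt (fun z => ρ / 2 * ‖z - c‖ ^ 2) (toDual ℝ E (ρ • (a - c))) a := by
    refine (((hasFDerivAt_id a).sub_const c).norm_sq.const_mul (ρ / 2)).congr_fderiv ?_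
    ext y
    simp only [id_eq, smul_apply, ContinuousLinearMap.comp_id, coe_innerSL_apply,
      nsmul_eq_mul, Nat.cast_ofNat, smul_eq_mul, map_smul, toDual_apply_apply]
    ring
  have hzero := hmin.hasFDerivAt_eq_zero (hf.hasFDerivAt.add hquad)
  rw [← toDual_gradient, ← map_add, LinearIsometryEquiv.map_eq_zero_iff] at hzero
  rw [eq_neg_of_add_eq_zero_left hzero, ← smul_neg, neg_sub]

theorem norm_sub_eq_of_isLocalMin_add_sq (hρ : 0 < ρ) (hf : DifferentiableAt ℝ f a)
    (hmin : IsLocalMin (fun z => f z + ρ / 2 * ‖z - c‖ ^ 2) a) :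
    ‖a - c‖ = ρ⁻¹ * ‖gradient f a‖ := by
  rw [gradient_eq_smul_sub_of_isLocalMin_add_sq hf hmin, norm_smul, Real.norm_of_nonneg hρ.le,
    norm_sub_rev, inv_mul_cancel_left₀ hρ.ne']

end Proximal

theorem eq_mul_pow_of_forall_succ_eq_mul {M : Type*} [Monoid M] {ρ : ℕ → M} {γ : M}
    (h : ∀ k, ρ (k + 1) = ρ k * γ) (k : ℕ) : ρ k = ρ 0 * γ ^ k := by
  induction k with
  | zero => simp
  | succ k ih => rw [h, ih, pow_succ, mul_assoc]

theorem summable_inv_of_forall_succ_eq_mul {ρ : ℕ → ℝ} {γ : ℝ} (hγ : 1 < γ)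
    (h : ∀ k, ρ (k + 1) = γ * ρ k) : Summable fun k => (ρ k)⁻¹ := by
  have hρ : ∀ k, ρ k = ρ 0 * γ ^ k :=
    eq_mul_pow_of_forall_succ_eq_mul fun k => (h k).trans (mul_comm _ _)
  have hgeom : (fun k => (ρ k)⁻¹) = fun k => (ρ 0)⁻¹ * γ⁻¹ ^ k :=
    funext fun k => by rw [hρ k, mul_inv, inv_pow]
  rw [hgeom]
  exact (summable_geometric_of_lt_one (by positivity) (inv_lt_one_of_one_lt₀ hγ)).mul_left _

theorem summable_inv_sqrt_of_forall_succ_eq_mul {ρ : ℕ → ℝ} {γ : ℝ} (hγ : 1 < γ)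
    (h : ∀ k, ρ (k + 1) = γ * ρ k) : Summable fun k => (√(ρ k))⁻¹ :=
  summable_inv_of_forall_succ_eq_mul (Real.lt_sqrt_of_sq_lt (by rwa [one_pow])) fun k => by
    rw [h, Real.sqrt_mul (by linarith)]

section Splitting

variable {E : Type*} [NormedAddCommGroup E] [CompleteSpace E] {x v u : ℕ → E}

theorem exists_tendsto_of_summable_residuals
    (hu : ∀ k, u (k + 1) = u k + (x (k + 1) - v (k + 1)))
    (hprimal : Summable fun k => ‖x (k + 1) - (v k - u k)‖)
    (hdual : Summable fun k => ‖u (k + 1)‖) :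
    ∃ vs, Tendsto x atTop (𝓝 vs) ∧ Tendsto v atTop (𝓝 vs) ∧ Tendsto u atTop (𝓝 0) := by
  have hstep : ∀ k, v (k + 1) - v k = (x (k + 1) - (v k - u k)) - u (k + 1) := fun k => by
    rw [hu k]; abel
  have hcauchy : CauchySeq v := by
    refine cauchySeq_of_summable_dist <| (hprimal.add hdual).of_nonneg_of_le
      (fun _ => dist_nonneg) fun k => ?_
    rw [dist_comm, dist_eq_norm, Nat.succ_eq_add_one, hstep]
    exact norm_sub_le _ _
  obtain ⟨vs, hv⟩ := cauchySeq_tendsto_of_complete hcauchy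
  have hres : Tendsto (fun k => x (k + 1) - (v k - u k)) atTop (𝓝 0) :=
    tendsto_zero_iff_norm_tendsto_zero.mpr hprimal.tendsto_atTop_zero
  have hu0 : Tendsto u atTop (𝓝 0) := (tendsto_add_atTop_iff_nat 1).mp <|
    tendsto_zero_iff_norm_tendsto_zero.mpr hdual.tendsto_atTop_zero
  refine ⟨vs, (tendsto_add_atTop_iff_nat 1).mp ?_, hv, hu0⟩
  simpa using hres.add (hv.sub hu0)

end Splitting

theorem plug_and_play_admm_fixed_point_monotone_general
    (n : ℕ)
    (f : EuclideanSpace ℝ (Fin n) → ℝ) (L : ℝ)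
    (hf : Differentiable ℝ f)
    (hgrad : ∀ z : EuclideanSpace ℝ (Fin n), ‖gradient f z‖ ≤ L * Real.sqrt n)
    (D : ℝ → EuclideanSpace ℝ (Fin n) → EuclideanSpace ℝ (Fin n)) (C : ℝ)
    (hD : ∀ σ : ℝ, 0 < σ → ∀ z : EuclideanSpace ℝ (Fin n),
      ‖D σ z - z‖ ^ 2 ≤ (n : ℝ) * σ ^ 2 * C)
    (lam : ℝ) (hlam : 0 < lam)
    (ρ : ℕ → ℝ) (hρ : ∀ k, 0 < ρ k)
    (γ : ℝ) (hγ : 1 < γ)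
    (hupdate : ∀ k, ρ (k + 1) = γ * ρ k)
    (x v u : ℕ → EuclideanSpace ℝ (Fin n))
    (hx : ∀ k, ∀ z : EuclideanSpace ℝ (Fin n),
      f (x (k + 1)) + ρ k / 2 * ‖x (k + 1) - (v k - u k)‖ ^ 2
        ≤ f z + ρ k / 2 * ‖z - (v k - u k)‖ ^ 2)
    (hv : ∀ k, v (k + 1) = D (Real.sqrt (lam / ρ k)) (x (k + 1) + u k))
    (hu : ∀ k, u (k + 1) = u k + (x (k + 1) - v (k + 1))) :
    ∃ xs vs us : EuclideanSpace ℝ (Fin n),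
      Tendsto (fun k => ‖x k - xs‖) atTop (𝓝 0) ∧
      Tendsto (fun k => ‖v k - vs‖) atTop (𝓝 0) ∧
      Tendsto (fun k => ‖u k - us‖) atTop (𝓝 0) := by
  have hprimal : ∀ k, ‖x (k + 1) - (v k - u k)‖ ≤ (ρ k)⁻¹ * (L * √n) := fun k => by
    rw [norm_sub_eq_of_isLocalMin_add_sq (hρ k) (hf _) (.of_forall (hx k))]
    exact mul_le_mul_of_nonneg_left (hgrad _) (inv_nonneg.mpr (hρ k).le)
  have hdual : ∀ k, ‖u (k + 1)‖ ≤ (√(ρ k))⁻¹ * √(n * lam * C) := fun k => by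
    have hσ : 0 < √(lam / ρ k) := Real.sqrt_pos.mpr (div_pos hlam (hρ k))
    have hden := hD _ hσ (x (k + 1) + u k)
    rw [← hv k, Real.sq_sqrt (div_pos hlam (hρ k)).le,
      show v (k + 1) - _ = -u (k + 1) by rw [hu k]; abel, norm_neg] at hden
    calc ‖u (k + 1)‖ ≤ √(n * lam * C / ρ k) := Real.le_sqrt_of_sq_le (hden.trans_eq (by ring))
      _ = (√(ρ k))⁻¹ * √(n * lam * C) := by rw [Real.sqrt_div' _ (hρ k).le, div_eq_inv_mul]
  obtain ⟨vs, hxlim, hvlim, hulim⟩ := exists_tendsto_of_summable_residuals hu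
    ((summable_inv_of_forall_succ_eq_mul hγ hupdate).mul_right _ |>.of_nonneg_of_le
      (fun _ => norm_nonneg _) hprimal)
    ((summable_inv_sqrt_of_forall_succ_eq_mul hγ hupdate).mul_right _ |>.of_nonneg_of_le
      (fun _ => norm_nonneg _) hdual)
  exact ⟨vs, vs, 0, tendsto_iff_norm_sub_tendsto_zero.mp hxlim,
    tendsto_iff_norm_sub_tendsto_zero.mp hvlim, tendsto_iff_norm_sub_tendsto_zero.mp hulim⟩

/-- **Fixed point convergence of Plug-and-Play ADMM with monotone update rule.**
For Plug-and-Play ADMM iterates with monotone parameter update `ρ (k+1) = γ * ρ k` (γ > 1),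
a differentiable `f` with gradient bounded by `L * √n`, and a bounded denoiser with constant
`C ≥ 0`, the iterates `x, v, u` converge to some limits `x*, v*, u*`. -/
theorem plug_and_play_admm_fixed_point_monotone
    (n : ℕ) (hn : 1 ≤ n)
    (f : EuclideanSpace ℝ (Fin n) → ℝ) (L : ℝ)
    (hf : Differentiable ℝ f)
    (hgrad : ∀ z : EuclideanSpace ℝ (Fin n), ‖gradient f z‖ ≤ L * Real.sqrt n)
    (D : ℝ → EuclideanSpace ℝ (Fin n) → EuclideanSpace ℝ (Fin n)) (C : ℝ)
    (hC : 0 ≤ C)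
    (hD : ∀ σ : ℝ, 0 < σ → ∀ z : EuclideanSpace ℝ (Fin n),
      ‖D σ z - z‖ ^ 2 ≤ (n : ℝ) * σ ^ 2 * C)
    (lam : ℝ) (hlam : 0 < lam)
    (ρ : ℕ → ℝ) (hρ : ∀ k, 0 < ρ k)
    (γ : ℝ) (hγ : 1 < γ)
    (hupdate : ∀ k, ρ (k + 1) = γ * ρ k)
    (x v u : ℕ → EuclideanSpace ℝ (Fin n))
    (hx : ∀ k, ∀ z : EuclideanSpace ℝ (Fin n),
      f (x (k + 1)) + ρ k / 2 * ‖x (k + 1) - (v k - u k)‖ ^ 2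
        ≤ f z + ρ k / 2 * ‖z - (v k - u k)‖ ^ 2)
    (hv : ∀ k, v (k + 1) = D (Real.sqrt (lam / ρ k)) (x (k + 1) + u k))
    (hu : ∀ k, u (k + 1) = u k + (x (k + 1) - v (k + 1))) :
    ∃ xs vs us : EuclideanSpace ℝ (Fin n),
      Tendsto (fun k => ‖x k - xs‖) atTop (𝓝 0) ∧
      Tendsto (fun k => ‖v k - vs‖) atTop (𝓝 0) ∧
      Tendsto (fun k => ‖u k - us‖) atTop (𝓝 0) :=
  plug_and_play_admm_fixed_point_monotone_general n f L hf hgrad D C hD lam hlam ρ hρ γ hγ hupdate x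
    v u hx hv hu
end

section
/- Let x^(k), v^(k), u^(k) be Plug-and-Play ADMM iterates for a differentiable f with gradient bounded by L√n and a bounded denoiser with constant C ≥ 0, where ρ_0 > 0, γ > 1, and for every k either ρ_{k+1} = ρ_k or ρ_{k+1} = γ ρ_k. If there exists K such that ρ_{k+1} = γ ρ_k for all k ≥ K, then there exist x*, v*, u* ∈ ℝ^n such that ‖x^(k) − x*‖₂ → 0, ‖v^(k) − v*‖₂ → 0 and ‖u^(k) − u*‖₂ → 0 as k → ∞. -/
open Filter Topology

/-- **Fixed point convergence of Plug-and-Play ADMM when Case 1 eventually always occurs.**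
If, for Plug-and-Play ADMM iterates where at every step either `ρ (k+1) = ρ k` or
`ρ (k+1) = γ * ρ k`, there exists `K` such that `ρ (k+1) = γ * ρ k` for all `k ≥ K`,
then the iterates converge to some limits. -/
theorem plug_and_play_admm_fixed_point_eventually_case1
    (n : ℕ) (hn : 1 ≤ n)
    (f : EuclideanSpace ℝ (Fin n) → ℝ) (L : ℝ)
    (hf : Differentiable ℝ f)
    (hgrad : ∀ z : EuclideanSpace ℝ (Fin n), ‖gradient f z‖ ≤ L * Real.sqrt n)
    (D : ℝ → EuclideanSpace ℝ (Fin n) → EuclideanSpace ℝ (Fin n)) (C : ℝ)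
    (hC : 0 ≤ C)
    (hD : ∀ σ : ℝ, 0 < σ → ∀ z : EuclideanSpace ℝ (Fin n),
      ‖D σ z - z‖ ^ 2 ≤ (n : ℝ) * σ ^ 2 * C)
    (lam : ℝ) (hlam : 0 < lam)
    (ρ : ℕ → ℝ) (hρ : ∀ k, 0 < ρ k)
    (γ : ℝ) (hγ : 1 < γ)
    (hstep : ∀ k, ρ (k + 1) = ρ k ∨ ρ (k + 1) = γ * ρ k)
    (hK : ∃ K, ∀ k ≥ K, ρ (k + 1) = γ * ρ k)
    (x v u : ℕ → EuclideanSpace ℝ (Fin n))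
    (hx : ∀ k, ∀ z : EuclideanSpace ℝ (Fin n),
      f (x (k + 1)) + ρ k / 2 * ‖x (k + 1) - (v k - u k)‖ ^ 2
        ≤ f z + ρ k / 2 * ‖z - (v k - u k)‖ ^ 2)
    (hv : ∀ k, v (k + 1) = D (Real.sqrt (lam / ρ k)) (x (k + 1) + u k))
    (hu : ∀ k, u (k + 1) = u k + (x (k + 1) - v (k + 1))) :
    ∃ xs vs us : EuclideanSpace ℝ (Fin n),
      Tendsto (fun k => ‖x k - xs‖) atTop (𝓝 0) ∧
      Tendsto (fun k => ‖v k - vs‖) atTop (𝓝 0) ∧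
      Tendsto (fun k => ‖u k - us‖) atTop (𝓝 0) := by
  obtain ⟨K, hK⟩ := hK
  set Ln : ℝ := L * Real.sqrt n with hLn
  have hLn0 : 0 ≤ Ln := le_trans (norm_nonneg _) (hgrad 0)
  -- bound on fderiv from bound on gradient
  have hfd : ∀ z, ‖fderiv ℝ f z‖ ≤ Ln := by
    intro z
    have h1 : ‖gradient f z‖ = ‖fderiv ℝ f z‖ := by
      rw [gradient]
      exact LinearIsometryEquiv.norm_map _ _
    rw [← h1]; exact hgrad z
  -- mean-value Lipschitz bound
  have hlip : ∀ a b : EuclideanSpace ℝ (Fin n), f a - f b ≤ Ln * ‖a - b‖ := by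
    intro a b
    have h := (convex_univ : Convex ℝ (Set.univ : Set (EuclideanSpace ℝ (Fin n)))).norm_image_sub_le_of_norm_fderiv_le
      (fun z _ => hf z) (fun z _ => hfd z) (Set.mem_univ b) (Set.mem_univ a)
    calc f a - f b ≤ |f a - f b| := le_abs_self _
      _ = ‖f a - f b‖ := (Real.norm_eq_abs _).symm
      _ ≤ Ln * ‖a - b‖ := h
  -- step 1: bound on the x-update residual
  have hxb : ∀ k, ‖x (k + 1) - (v k - u k)‖ ≤ 2 * Ln / ρ k := by
    intro k
    have h1 := hx k (v k - u k)
    rw [sub_self, norm_zero] at h1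
    have h2 : ρ k / 2 * ‖x (k + 1) - (v k - u k)‖ ^ 2
        ≤ f (v k - u k) - f (x (k + 1)) := by nlinarith [h1]
    have h3 : f (v k - u k) - f (x (k + 1)) ≤ Ln * ‖x (k + 1) - (v k - u k)‖ := by
      have := hlip (v k - u k) (x (k + 1))
      rwa [norm_sub_rev] at this
    rw [le_div_iff₀ (hρ k)]
    nlinarith [norm_nonneg (x (k + 1) - (v k - u k)), hρ k]
  -- step 2: bound on the denoiser residual
  have hvb : ∀ k, ‖v (k + 1) - (x (k + 1) + u k)‖
      ≤ Real.sqrt ((n : ℝ) * lam * C) * (Real.sqrt (ρ k))⁻¹ := by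
    intro k
    have hσ : (0:ℝ) < Real.sqrt (lam / ρ k) :=
      Real.sqrt_pos.2 (div_pos hlam (hρ k))
    have h1 := hD _ hσ (x (k + 1) + u k)
    rw [← hv k] at h1
    have hsq : Real.sqrt (lam / ρ k) ^ 2 = lam / ρ k :=
      Real.sq_sqrt (le_of_lt (div_pos hlam (hρ k)))
    rw [hsq] at h1
    have h2 : ‖v (k + 1) - (x (k + 1) + u k)‖ ^ 2 ≤ ((n : ℝ) * lam * C) / ρ k := by
      calc ‖v (k + 1) - (x (k + 1) + u k)‖ ^ 2 ≤ (n : ℝ) * (lam / ρ k) * C := h1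
        _ = ((n : ℝ) * lam * C) / ρ k := by ring
    have h3 : ‖v (k + 1) - (x (k + 1) + u k)‖ ≤ Real.sqrt (((n : ℝ) * lam * C) / ρ k) := by
      rw [Real.le_sqrt (norm_nonneg _)
        (div_nonneg (by positivity) (le_of_lt (hρ k)))]
      exact h2
    calc ‖v (k + 1) - (x (k + 1) + u k)‖ ≤ Real.sqrt (((n : ℝ) * lam * C) / ρ k) := h3
      _ = Real.sqrt ((n : ℝ) * lam * C) / Real.sqrt (ρ k) := Real.sqrt_div (by positivity) _
      _ = Real.sqrt ((n : ℝ) * lam * C) * (Real.sqrt (ρ k))⁻¹ := div_eq_mul_inv _ _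
  -- u (k+1) expressed via denoiser residual
  have hub : ∀ k, ‖u (k + 1)‖ ≤ Real.sqrt ((n : ℝ) * lam * C) * (Real.sqrt (ρ k))⁻¹ := by
    intro k
    have h1 : u (k + 1) = -(v (k + 1) - (x (k + 1) + u k)) := by rw [hu k]; abel
    rw [h1, norm_neg]
    exact hvb k
  -- geometric constants
  set r : ℝ := (Real.sqrt γ)⁻¹ with hrdef
  have hγ0 : (0:ℝ) < γ := lt_trans one_pos hγ
  have hsγ : 1 < Real.sqrt γ := by
    rw [show (1:ℝ) = Real.sqrt 1 by simp]
    exact Real.sqrt_lt_sqrt zero_le_one hγ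
  have hr0 : 0 < r := inv_pos.2 (lt_trans one_pos hsγ)
  have hr1 : r < 1 := inv_lt_one_of_one_lt₀ hsγ
  -- geometric growth of √ρ inverse
  have hs : ∀ m : ℕ, (Real.sqrt (ρ (K + m)))⁻¹ = (Real.sqrt (ρ K))⁻¹ * r ^ m := by
    intro m
    induction m with
    | zero => simp
    | succ m ih =>
      have h1 : ρ (K + (m + 1)) = γ * ρ (K + m) := by
        have := hK (K + m) (Nat.le_add_right K m)
        rw [← this]; ring_nf
      rw [show K + (m + 1) = (K + m) + 1 from rfl] at *
      rw [h1, Real.sqrt_mul (le_of_lt hγ0), mul_inv, ih, hrdef]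
      ring
  -- geometric growth of ρ inverse
  have ht : ∀ m : ℕ, (ρ (K + m))⁻¹ = (ρ K)⁻¹ * (γ⁻¹) ^ m := by
    intro m
    induction m with
    | zero => simp
    | succ m ih =>
      have h1 : ρ (K + (m + 1)) = γ * ρ (K + m) := by
        have := hK (K + m) (Nat.le_add_right K m)
        rw [← this]; ring_nf
      rw [h1, mul_inv, ih]
      ring
  have hγinv_le_r : γ⁻¹ ≤ r := by
    have h1 : r * r = γ⁻¹ := by
      rw [hrdef, ← mul_inv]
      congr 1
      exact Real.mul_self_sqrt (le_of_lt hγ0)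
    nlinarith [hr0, hr1]
  set M1 : ℝ := (ρ K)⁻¹ / r ^ K with hM1
  set M2 : ℝ := (Real.sqrt (ρ K))⁻¹ / r ^ K with hM2
  have hM10 : 0 ≤ M1 := div_nonneg (inv_nonneg.2 (le_of_lt (hρ K))) (le_of_lt (pow_pos hr0 K))
  have hM20 : 0 ≤ M2 :=
    div_nonneg (inv_nonneg.2 (Real.sqrt_nonneg _)) (le_of_lt (pow_pos hr0 K))
  have hb1 : ∀ k ≥ K, (ρ k)⁻¹ ≤ M1 * r ^ k := by
    intro k hk
    obtain ⟨m, rfl⟩ := Nat.exists_eq_add_of_le hk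
    rw [ht m]
    have h1 : (γ⁻¹) ^ m ≤ r ^ m :=
      pow_le_pow_left₀ (le_of_lt (inv_pos.2 hγ0)) hγinv_le_r m
    have hrK : r ^ K ≠ 0 := pow_ne_zero _ (ne_of_gt hr0)
    have h2 : M1 * r ^ (K + m) = (ρ K)⁻¹ * r ^ m := by
      have hcan : (r ^ K)⁻¹ * r ^ K = 1 := inv_mul_cancel₀ hrK
      rw [hM1, pow_add, div_eq_mul_inv]
      calc (ρ K)⁻¹ * (r ^ K)⁻¹ * (r ^ K * r ^ m)
          = (ρ K)⁻¹ * ((r ^ K)⁻¹ * r ^ K) * r ^ m := by ring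
        _ = (ρ K)⁻¹ * r ^ m := by rw [hcan, mul_one]
    rw [h2]
    exact mul_le_mul_of_nonneg_left h1 (le_of_lt (inv_pos.2 (hρ K)))
  have hb2 : ∀ k ≥ K, (Real.sqrt (ρ k))⁻¹ ≤ M2 * r ^ k := by
    intro k hk
    obtain ⟨m, rfl⟩ := Nat.exists_eq_add_of_le hk
    rw [hs m]
    have hrK : r ^ K ≠ 0 := pow_ne_zero _ (ne_of_gt hr0)
    have h2 : M2 * r ^ (K + m) = (Real.sqrt (ρ K))⁻¹ * r ^ m := by
      have hcan : (r ^ K)⁻¹ * r ^ K = 1 := inv_mul_cancel₀ hrK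
      rw [hM2, pow_add, div_eq_mul_inv]
      calc (Real.sqrt (ρ K))⁻¹ * (r ^ K)⁻¹ * (r ^ K * r ^ m)
          = (Real.sqrt (ρ K))⁻¹ * ((r ^ K)⁻¹ * r ^ K) * r ^ m := by ring
        _ = (Real.sqrt (ρ K))⁻¹ * r ^ m := by rw [hcan, mul_one]
    rw [h2]
  -- bound on consecutive v differences
  set B : ℝ := Real.sqrt ((n : ℝ) * lam * C) with hB
  have hB0 : 0 ≤ B := Real.sqrt_nonneg _
  have hg : ∀ k, ‖v (k + 1) - v k‖ ≤ B * (Real.sqrt (ρ k))⁻¹ + 2 * Ln * (ρ k)⁻¹ := by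
    intro k
    have h1 : v (k + 1) - v k
        = (v (k + 1) - (x (k + 1) + u k)) + (x (k + 1) - (v k - u k)) := by abel
    calc ‖v (k + 1) - v k‖
        ≤ ‖v (k + 1) - (x (k + 1) + u k)‖ + ‖x (k + 1) - (v k - u k)‖ := by
          rw [h1]; exact norm_add_le _ _
      _ ≤ B * (Real.sqrt (ρ k))⁻¹ + 2 * Ln / ρ k := add_le_add (hvb k) (hxb k)
      _ = B * (Real.sqrt (ρ k))⁻¹ + 2 * Ln * (ρ k)⁻¹ := by rw [div_eq_mul_inv]
  set A : ℝ := B * M2 + 2 * Ln * M1 with hA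
  have hA0 : 0 ≤ A := by positivity
  have hgA : ∀ k ≥ K, ‖v (k + 1) - v k‖ ≤ A * r ^ k := by
    intro k hk
    calc ‖v (k + 1) - v k‖ ≤ B * (Real.sqrt (ρ k))⁻¹ + 2 * Ln * (ρ k)⁻¹ := hg k
      _ ≤ B * (M2 * r ^ k) + 2 * Ln * (M1 * r ^ k) :=
          add_le_add (mul_le_mul_of_nonneg_left (hb2 k hk) hB0)
            (mul_le_mul_of_nonneg_left (hb1 k hk) (by positivity))
      _ = A * r ^ k := by rw [hA]; ring
  -- summability of v-differences, hence convergence of v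
  have hsum : Summable (fun k => ‖v (k + 1) - v k‖) := by
    rw [← summable_nat_add_iff K]
    refine Summable.of_nonneg_of_le (fun m => norm_nonneg _) (fun m => ?_)
      (((summable_geometric_of_lt_one (le_of_lt hr0) hr1).mul_left (A * r ^ K)))
    calc ‖v (m + K + 1) - v (m + K)‖ ≤ A * r ^ (m + K) :=
          hgA (m + K) (Nat.le_add_left K m)
      _ = A * r ^ K * r ^ m := by rw [pow_add]; ring
  have hcauchy : CauchySeq v := by
    apply cauchySeq_of_summable_dist
    refine hsum.congr fun k => ?_
    rw [dist_eq_norm, norm_sub_rev]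
  obtain ⟨vs, hvs⟩ := cauchySeq_tendsto_of_complete hcauchy
  -- geometric sequence tends to zero
  have hgeo : Tendsto (fun k : ℕ => r ^ k) atTop (𝓝 0) :=
    tendsto_pow_atTop_nhds_zero_of_lt_one (le_of_lt hr0) hr1
  -- u tends to zero
  have hu0 : Tendsto u atTop (𝓝 0) := by
    rw [← tendsto_add_atTop_iff_nat 1]
    have hbound : ∀ᶠ k in atTop, ‖u (k + 1)‖ ≤ (B * M2) * r ^ k := by
      filter_upwards [eventually_ge_atTop K] with k hk
      calc ‖u (k + 1)‖ ≤ B * (Real.sqrt (ρ k))⁻¹ := hub k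
        _ ≤ B * (M2 * r ^ k) := mul_le_mul_of_nonneg_left (hb2 k hk) hB0
        _ = (B * M2) * r ^ k := by ring
    exact squeeze_zero_norm' hbound (by simpa using hgeo.const_mul (B * M2))
  -- the x-residual tends to zero
  have hd0 : Tendsto (fun k => x (k + 1) - (v k - u k)) atTop (𝓝 0) := by
    have hbound : ∀ᶠ k in atTop, ‖x (k + 1) - (v k - u k)‖ ≤ (2 * Ln * M1) * r ^ k := by
      filter_upwards [eventually_ge_atTop K] with k hk
      calc ‖x (k + 1) - (v k - u k)‖ ≤ 2 * Ln / ρ k := hxb k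
        _ = 2 * Ln * (ρ k)⁻¹ := by rw [div_eq_mul_inv]
        _ ≤ 2 * Ln * (M1 * r ^ k) := mul_le_mul_of_nonneg_left (hb1 k hk) (by positivity)
        _ = (2 * Ln * M1) * r ^ k := by ring
    exact squeeze_zero_norm' hbound (by simpa using hgeo.const_mul (2 * Ln * M1))
  -- x tends to vs
  have hx0 : Tendsto x atTop (𝓝 vs) := by
    rw [← tendsto_add_atTop_iff_nat 1]
    have h1 : Tendsto (fun k => (x (k + 1) - (v k - u k)) + v k - u k) atTop
        (𝓝 (0 + vs - 0)) := (hd0.add hvs).sub hu0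
    rw [zero_add, sub_zero] at h1
    refine h1.congr fun k => ?_
    abel
  refine ⟨vs, vs, 0, ?_, ?_, ?_⟩
  · exact tendsto_iff_norm_sub_tendsto_zero.mp hx0
  · exact tendsto_iff_norm_sub_tendsto_zero.mp hvs
  · simpa [sub_zero] using tendsto_iff_norm_sub_tendsto_zero.mp hu0
end

section
/- Let x^(k), v^(k), u^(k) be Plug-and-Play ADMM iterates for a differentiable f with gradient bounded by L√n and a bounded denoiser with constant C ≥ 0, where ρ_0 > 0, γ > 1, 0 ≤ η < 1, and for every k either ρ_{k+1} = ρ_k or ρ_{k+1} = γ ρ_k. If there exists K such that for all k ≥ K one has ρ_{k+1} = ρ_k and Δ_{k+1} ≤ η Δ_k, then there exist x*, v*, u* ∈ ℝ^n such that ‖x^(k) − x*‖₂ → 0, ‖v^(k) − v*‖₂ → 0 and ‖u^(k) − u*‖₂ → 0 as k → ∞. -/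
open Filter Topology

/-- **Fixed point convergence of Plug-and-Play ADMM when Case 2 eventually always occurs.**
Here `Δ (k+1) = (1/√n)(‖x^(k+1) − x^(k)‖ + ‖v^(k+1) − v^(k)‖ + ‖u^(k+1) − u^(k)‖)`.
If there exists `K` such that for all `k ≥ K` one has `ρ (k+1) = ρ k` and
`Δ (k+1) ≤ η * Δ k` (with `0 ≤ η < 1`), then the iterates converge to some limits. -/
theorem plug_and_play_admm_fixed_point_eventually_case2
    (n : ℕ) (hn : 1 ≤ n)
    (f : EuclideanSpace ℝ (Fin n) → ℝ) (L : ℝ)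
    (hf : Differentiable ℝ f)
    (hgrad : ∀ z : EuclideanSpace ℝ (Fin n), ‖gradient f z‖ ≤ L * Real.sqrt n)
    (D : ℝ → EuclideanSpace ℝ (Fin n) → EuclideanSpace ℝ (Fin n)) (C : ℝ)
    (hC : 0 ≤ C)
    (hD : ∀ σ : ℝ, 0 < σ → ∀ z : EuclideanSpace ℝ (Fin n),
      ‖D σ z - z‖ ^ 2 ≤ (n : ℝ) * σ ^ 2 * C)
    (lam : ℝ) (hlam : 0 < lam)
    (ρ : ℕ → ℝ) (hρ : ∀ k, 0 < ρ k)
    (γ : ℝ) (hγ : 1 < γ)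
    (η : ℝ) (hη0 : 0 ≤ η) (hη1 : η < 1)
    (hstep : ∀ k, ρ (k + 1) = ρ k ∨ ρ (k + 1) = γ * ρ k)
    (x v u : ℕ → EuclideanSpace ℝ (Fin n))
    (hx : ∀ k, ∀ z : EuclideanSpace ℝ (Fin n),
      f (x (k + 1)) + ρ k / 2 * ‖x (k + 1) - (v k - u k)‖ ^ 2
        ≤ f z + ρ k / 2 * ‖z - (v k - u k)‖ ^ 2)
    (hv : ∀ k, v (k + 1) = D (Real.sqrt (lam / ρ k)) (x (k + 1) + u k))
    (hu : ∀ k, u (k + 1) = u k + (x (k + 1) - v (k + 1)))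
    (Δ : ℕ → ℝ)
    (hΔ : ∀ k, Δ (k + 1) = (Real.sqrt n)⁻¹ *
      (‖x (k + 1) - x k‖ + ‖v (k + 1) - v k‖ + ‖u (k + 1) - u k‖))
    (hK : ∃ K, ∀ k ≥ K, ρ (k + 1) = ρ k ∧ Δ (k + 1) ≤ η * Δ k) :
    ∃ xs vs us : EuclideanSpace ℝ (Fin n),
      Tendsto (fun k => ‖x k - xs‖) atTop (𝓝 0) ∧
      Tendsto (fun k => ‖v k - vs‖) atTop (𝓝 0) ∧
      Tendsto (fun k => ‖u k - us‖) atTop (𝓝 0) := by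

  obtain ⟨K, hKp⟩ := hK
  set s := Real.sqrt n with hs_def
  have hs : 0 < s := Real.sqrt_pos.mpr (by exact_mod_cast Nat.lt_of_lt_of_le Nat.zero_lt_one hn)
  have hgeo : ∀ j, Δ (K + 1 + j) ≤ Δ (K + 1) * η ^ j := by
    intro j
    induction j with
    | zero => simp
    | succ j ih =>
      have h1 : Δ (K + 1 + (j + 1)) ≤ η * Δ (K + 1 + j) := by
        have := (hKp (K + 1 + j) (by omega)).2
        simpa [show K + 1 + (j + 1) = K + 1 + j + 1 by ring] using this
      calc Δ (K + 1 + (j + 1)) ≤ η * Δ (K + 1 + j) := h1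
        _ ≤ η * (Δ (K + 1) * η ^ j) := mul_le_mul_of_nonneg_left ih hη0
        _ = Δ (K + 1) * η ^ (j + 1) := by ring
  have key : ∀ (w : ℕ → EuclideanSpace ℝ (Fin n)),
      (∀ k, ‖w (k + 1) - w k‖ ≤ s * Δ (k + 1)) →
      ∃ ws, Tendsto (fun k => ‖w k - ws‖) atTop (𝓝 0) := by
    intro w hw
    have hcs : CauchySeq (fun j => w (j + (K + 1))) := by
      apply cauchySeq_of_le_geometric η (s * Δ (K + 1) * η) hη1
      intro j
      have h1 := hw (j + (K + 1))
      have h2 : Δ (j + (K + 1) + 1) ≤ Δ (K + 1) * η ^ (j + 1) := by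
        have := hgeo (j + 1)
        simpa [show K + 1 + (j + 1) = j + (K + 1) + 1 by ring] using this
      rw [dist_eq_norm, norm_sub_rev, show j + 1 + (K + 1) = j + (K + 1) + 1 from by ring]
      calc ‖w (j + (K + 1) + 1) - w (j + (K + 1))‖ ≤ s * Δ (j + (K + 1) + 1) := h1
        _ ≤ s * (Δ (K + 1) * η ^ (j + 1)) := mul_le_mul_of_nonneg_left h2 hs.le
        _ = s * Δ (K + 1) * η * η ^ j := by ring
    obtain ⟨ws, hws⟩ := cauchySeq_tendsto_of_complete hcs
    refine ⟨ws, ?_⟩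
    have hT : Tendsto w atTop (𝓝 ws) := (tendsto_add_atTop_iff_nat (K + 1)).mp hws
    exact tendsto_iff_norm_sub_tendsto_zero.mp hT
  have hbd : ∀ k, ‖x (k + 1) - x k‖ ≤ s * Δ (k + 1) ∧ ‖v (k + 1) - v k‖ ≤ s * Δ (k + 1) ∧
      ‖u (k + 1) - u k‖ ≤ s * Δ (k + 1) := by
    intro k
    have h : s * Δ (k + 1) = ‖x (k + 1) - x k‖ + ‖v (k + 1) - v k‖ + ‖u (k + 1) - u k‖ := by
      rw [hΔ, ← mul_assoc, mul_inv_cancel₀ hs.ne', one_mul]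
    refine ⟨?_, ?_, ?_⟩ <;> rw [h] <;>
      linarith [norm_nonneg (x (k + 1) - x k), norm_nonneg (v (k + 1) - v k),
        norm_nonneg (u (k + 1) - u k)]
  obtain ⟨xs, hxs⟩ := key x (fun k => (hbd k).1)
  obtain ⟨vs, hvs⟩ := key v (fun k => (hbd k).2.1)
  obtain ⟨us, hus⟩ := key u (fun k => (hbd k).2.2)
  exact ⟨xs, vs, us, hxs, hvs, hus⟩
end

section
/- Let x^(k), v^(k), u^(k) be Plug-and-Play ADMM iterates with monotone parameter update ρ_{k+1} = γ ρ_k for all k ≥ 0, where ρ_0 > 0 and γ > 1, for a differentiable f with gradient bounded by L√n and a bounded denoiser with constant C ≥ 0. Then for every k ≥ 1, ‖x^(k+1) − v^(k+1)‖₂/√n ≤ √(λC/ρ_k) + √(λC/ρ_{k−1}); in particular ‖x^(k) − v^(k)‖₂ → 0 as k → ∞. -/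
/-!
The dual update rewrites as `u (k+1) = (x (k+1) + u k) - D σ_k (x (k+1) + u k)`, so the bounded
denoiser gives `‖u (k+1)‖² ≤ n σ_k² C = n λC/ρ_k`. The primal residual
`x (k+1) - v (k+1) = u (k+1) - u k` is then bounded by the triangle inequality, and the bound
tends to `0` because `ρ_k = γ^k ρ_0 → ∞`.
-/

open Filter Topology

theorem norm_denoiser_residual_le {E : Type*} [NormedAddCommGroup E] {D : ℝ → E → E}
    {c C lam ρ : ℝ} (hc : 0 ≤ c) (hD : ∀ σ : ℝ, 0 < σ → ∀ z : E, ‖D σ z - z‖ ^ 2 ≤ c * σ ^ 2 * C)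
    (hlam : 0 < lam) (hρ : 0 < ρ) (z : E) :
    ‖D √(lam / ρ) z - z‖ ≤ √c * √(lam * C / ρ) := by
  have hσ : 0 < lam / ρ := div_pos hlam hρ
  have hbound := hD _ (Real.sqrt_pos.mpr hσ) z
  rw [Real.sq_sqrt hσ.le] at hbound
  calc ‖D √(lam / ρ) z - z‖ = √(‖D √(lam / ρ) z - z‖ ^ 2) := (Real.sqrt_sq (norm_nonneg _)).symm
    _ ≤ √(c * (lam / ρ) * C) := Real.sqrt_le_sqrt hbound
    _ = √c * √(lam * C / ρ) := by rw [← Real.sqrt_mul hc]; ring_nf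

theorem tendsto_atTop_of_succ_eq_mul {ρ : ℕ → ℝ} {γ : ℝ} (hρ₀ : 0 < ρ 0) (hγ : 1 < γ)
    (hupdate : ∀ k, ρ (k + 1) = γ * ρ k) : Tendsto ρ atTop atTop := by
  have hρ : ∀ k, ρ k = ρ 0 * γ ^ k := by
    intro k
    induction k with
    | zero => simp
    | succ k ih => rw [hupdate, ih, pow_succ]; ring
  exact ((tendsto_pow_atTop_atTop_of_one_lt hγ).const_mul_atTop hρ₀).congr fun k => (hρ k).symm

theorem tendsto_sqrt_const_div_atTop {α : Type*} {l : Filter α} {ρ : α → ℝ}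
    (hρ : Tendsto ρ l atTop) (a : ℝ) : Tendsto (fun k => √(a / ρ k)) l (𝓝 0) := by
  simpa only [Real.sqrt_zero] using (tendsto_const_nhds.div_atTop hρ).sqrt

section ADMM

variable {E : Type*} [NormedAddCommGroup E] {x v u : ℕ → E}

theorem primal_residual_eq_sub_dual (hu : ∀ k, u (k + 1) = u k + (x (k + 1) - v (k + 1)))
    (k : ℕ) : x (k + 1) - v (k + 1) = u (k + 1) - u k := by
  rw [hu k]; abel

theorem norm_dual_le {D : ℝ → E → E} {c C lam : ℝ} {ρ : ℕ → ℝ} (hc : 0 ≤ c)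
    (hD : ∀ σ : ℝ, 0 < σ → ∀ z : E, ‖D σ z - z‖ ^ 2 ≤ c * σ ^ 2 * C)
    (hlam : 0 < lam) (hρ : ∀ k, 0 < ρ k)
    (hv : ∀ k, v (k + 1) = D √(lam / ρ k) (x (k + 1) + u k))
    (hu : ∀ k, u (k + 1) = u k + (x (k + 1) - v (k + 1))) (k : ℕ) :
    ‖u (k + 1)‖ ≤ √c * √(lam * C / ρ k) := by
  have hdual : u (k + 1) = -(D √(lam / ρ k) (x (k + 1) + u k) - (x (k + 1) + u k)) := by
    rw [← hv k, hu k]; abel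
  rw [hdual, norm_neg]
  exact norm_denoiser_residual_le hc hD hlam (hρ k) _

theorem norm_primal_residual_le {D : ℝ → E → E} {c C lam : ℝ} {ρ : ℕ → ℝ} (hc : 0 ≤ c)
    (hD : ∀ σ : ℝ, 0 < σ → ∀ z : E, ‖D σ z - z‖ ^ 2 ≤ c * σ ^ 2 * C)
    (hlam : 0 < lam) (hρ : ∀ k, 0 < ρ k)
    (hv : ∀ k, v (k + 1) = D √(lam / ρ k) (x (k + 1) + u k))
    (hu : ∀ k, u (k + 1) = u k + (x (k + 1) - v (k + 1))) (k : ℕ) :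
    ‖x (k + 2) - v (k + 2)‖ ≤ √c * (√(lam * C / ρ (k + 1)) + √(lam * C / ρ k)) := by
  rw [primal_residual_eq_sub_dual hu, mul_add]
  exact (norm_sub_le _ _).trans
    (add_le_add (norm_dual_le hc hD hlam hρ hv hu _) (norm_dual_le hc hD hlam hρ hv hu _))

end ADMM

theorem plug_and_play_admm_primal_residual_general
    (n : ℕ)
    (D : ℝ → EuclideanSpace ℝ (Fin n) → EuclideanSpace ℝ (Fin n)) (C : ℝ)
    (hD : ∀ σ : ℝ, 0 < σ → ∀ z : EuclideanSpace ℝ (Fin n),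
      ‖D σ z - z‖ ^ 2 ≤ (n : ℝ) * σ ^ 2 * C)
    (lam : ℝ) (hlam : 0 < lam)
    (ρ : ℕ → ℝ) (hρ : ∀ k, 0 < ρ k)
    (γ : ℝ) (hγ : 1 < γ)
    (hupdate : ∀ k, ρ (k + 1) = γ * ρ k)
    (x v u : ℕ → EuclideanSpace ℝ (Fin n))
    (hv : ∀ k, v (k + 1) = D (Real.sqrt (lam / ρ k)) (x (k + 1) + u k))
    (hu : ∀ k, u (k + 1) = u k + (x (k + 1) - v (k + 1))) :
    (∀ k, 1 ≤ k →
      ‖x (k + 1) - v (k + 1)‖ / Real.sqrt n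
        ≤ Real.sqrt (lam * C / ρ k) + Real.sqrt (lam * C / ρ (k - 1))) ∧
    Tendsto (fun k => ‖x k - v k‖) atTop (𝓝 0) := by
  have hresidual := norm_primal_residual_le (n.cast_nonneg (α := ℝ)) hD hlam hρ hv hu
  constructor
  · rintro (_ | k) hk
    · omega
    · exact div_le_of_le_mul₀ (Real.sqrt_nonneg _) (by positivity)
        ((hresidual k).trans_eq (mul_comm _ _))
  · have hsqrt :=
      tendsto_sqrt_const_div_atTop (tendsto_atTop_of_succ_eq_mul (hρ 0) hγ hupdate) (lam * C)
    have hbound := ((hsqrt.comp (tendsto_add_atTop_nat 1)).add hsqrt).const_mul √(n : ℝ)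
    rw [add_zero, mul_zero] at hbound
    exact (tendsto_add_atTop_iff_nat 2).mp
      (squeeze_zero (fun _ => norm_nonneg _) hresidual hbound)

/-- **Primal residual convergence of Plug-and-Play ADMM with monotone update rule.**
For monotone updates `ρ (k+1) = γ * ρ k` with `γ > 1`, for every `k ≥ 1`,
`‖x^(k+1) − v^(k+1)‖/√n ≤ √(λC/ρ_k) + √(λC/ρ_{k-1})`, and `‖x^(k) − v^(k)‖ → 0`. -/
theorem plug_and_play_admm_primal_residual
    (n : ℕ) (hn : 1 ≤ n)
    (f : EuclideanSpace ℝ (Fin n) → ℝ) (L : ℝ)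
    (hf : Differentiable ℝ f)
    (hgrad : ∀ z : EuclideanSpace ℝ (Fin n), ‖gradient f z‖ ≤ L * Real.sqrt n)
    (D : ℝ → EuclideanSpace ℝ (Fin n) → EuclideanSpace ℝ (Fin n)) (C : ℝ)
    (hC : 0 ≤ C)
    (hD : ∀ σ : ℝ, 0 < σ → ∀ z : EuclideanSpace ℝ (Fin n),
      ‖D σ z - z‖ ^ 2 ≤ (n : ℝ) * σ ^ 2 * C)
    (lam : ℝ) (hlam : 0 < lam)
    (ρ : ℕ → ℝ) (hρ : ∀ k, 0 < ρ k)
    (γ : ℝ) (hγ : 1 < γ)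
    (hupdate : ∀ k, ρ (k + 1) = γ * ρ k)
    (x v u : ℕ → EuclideanSpace ℝ (Fin n))
    (hx : ∀ k, ∀ z : EuclideanSpace ℝ (Fin n),
      f (x (k + 1)) + ρ k / 2 * ‖x (k + 1) - (v k - u k)‖ ^ 2
        ≤ f z + ρ k / 2 * ‖z - (v k - u k)‖ ^ 2)
    (hv : ∀ k, v (k + 1) = D (Real.sqrt (lam / ρ k)) (x (k + 1) + u k))
    (hu : ∀ k, u (k + 1) = u k + (x (k + 1) - v (k + 1))) :
    (∀ k, 1 ≤ k →
      ‖x (k + 1) - v (k + 1)‖ / Real.sqrt n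
        ≤ Real.sqrt (lam * C / ρ k) + Real.sqrt (lam * C / ρ (k - 1))) ∧
    Tendsto (fun k => ‖x k - v k‖) atTop (𝓝 0) :=
  plug_and_play_admm_primal_residual_general n D C hD lam hlam ρ hρ γ hγ hupdate x v u hv hu
end

section
/- Let x^(k), v^(k), u^(k) be Plug-and-Play ADMM iterates for a differentiable f with gradient bounded by L√n and a bounded denoiser with constant C ≥ 0, where the positive sequence (ρ_k) is nondecreasing and satisfies ρ_k ≤ γ ρ_{k−1} for all k ≥ 1, with ρ_0 > 0 and γ > 1. Then there exists a constant C' > 0, depending only on λ, C, L, γ and ρ_0 (and in particular independent of k and n), such that Δ_{k+1} ≤ C'/√ρ_k for all k ≥ 2. -/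
/-! A bounded denoiser makes the dual variable small, `‖u^(k+1)‖ ≤ √n √(λC) / √ρ_k`, because
`u^(k+1)` is exactly the denoiser residual at `x^(k+1) + u^(k)`. A gradient bound makes `f`
Lipschitz, so the `x`-update moves `v^(k) − u^(k)` by at most `2 L √n / ρ_k ≤ 2 L √n / (√ρ₀ √ρ_k)`.
Every residual is a combination of these quantities at the indices `k − 1, k, k + 1`, and the
growth condition `ρ_k ≤ γ ρ_{k−1}` lets us trade `1 / √ρ_{k−2}` and `1 / √ρ_{k−1}` for
`γ / √ρ_k`. -/

theorem norm_sub_le_of_norm_gradient_le {E : Type*} [NormedAddCommGroup E]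
    [InnerProductSpace ℝ E] [CompleteSpace E] {f : E → ℝ} {K : ℝ} (hf : Differentiable ℝ f)
    (hK : ∀ z, ‖gradient f z‖ ≤ K) (a b : E) : ‖f a - f b‖ ≤ K * ‖a - b‖ :=
  convex_univ.norm_image_sub_le_of_norm_fderiv_le (fun z _ => hf z)
    (fun z _ => by rw [← toDual_gradient, LinearIsometryEquiv.norm_map]; exact hK z)
    (Set.mem_univ b) (Set.mem_univ a)

/-- Compare the proximal objective at its minimiser `x` with its value at the centre `w`. -/
theorem norm_prox_sub_le {E : Type*} [SeminormedAddCommGroup E] {f : E → ℝ} {K ρ : ℝ} {x w : E}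
    (hK : 0 ≤ K) (hρ : 0 < ρ) (hf : ∀ a b, ‖f a - f b‖ ≤ K * ‖a - b‖)
    (hx : ∀ z, f x + ρ / 2 * ‖x - w‖ ^ 2 ≤ f z + ρ / 2 * ‖z - w‖ ^ 2) :
    ‖x - w‖ ≤ 2 * K / ρ := by
  have hmin := hx w
  rw [sub_self, norm_zero] at hmin
  have hlip : f w - f x ≤ K * ‖x - w‖ := by
    have := hf w x
    rw [norm_sub_rev w x, Real.norm_eq_abs] at this
    exact (le_abs_self _).trans this
  have hquad : ρ / 2 * ‖x - w‖ ^ 2 ≤ K * ‖x - w‖ := by nlinarith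
  rw [le_div_iff₀ hρ]
  rcases (norm_nonneg (x - w)).eq_or_lt with h | h
  · rw [← h, zero_mul]; linarith
  · nlinarith

theorem norm_denoiser_sub_le {E : Type*} [SeminormedAddCommGroup E] {n : ℕ} {lam C ρ : ℝ}
    {D : ℝ → E → E} (hlam : 0 < lam) (hρ : 0 < ρ)
    (hD : ∀ σ : ℝ, 0 < σ → ∀ z : E, ‖D σ z - z‖ ^ 2 ≤ (n : ℝ) * σ ^ 2 * C) (z : E) :
    ‖D (Real.sqrt (lam / ρ)) z - z‖ ≤ Real.sqrt n * Real.sqrt (lam * C) / Real.sqrt ρ := by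
  have hσ : 0 < lam / ρ := div_pos hlam hρ
  have h := hD _ (Real.sqrt_pos.2 hσ) z
  rw [Real.sq_sqrt hσ.le, show (n : ℝ) * (lam / ρ) * C = n * (lam * C) / ρ by ring] at h
  rw [← Real.sqrt_mul n.cast_nonneg, ← Real.sqrt_div' _ hρ.le]
  exact Real.le_sqrt_of_sq_le h

theorem inv_sqrt_le_mul_inv_sqrt {a b g : ℝ} (ha : 0 < a) (hb : 0 < b) (hg : 0 ≤ g)
    (h : b ≤ g ^ 2 * a) : (Real.sqrt a)⁻¹ ≤ g * (Real.sqrt b)⁻¹ := by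
  have hsb : Real.sqrt b ≤ g * Real.sqrt a := by
    rw [← Real.sqrt_sq hg, ← Real.sqrt_mul (sq_nonneg g)]
    exact Real.sqrt_le_sqrt h
  rw [← div_eq_mul_inv, le_div_iff₀ (Real.sqrt_pos.2 hb), ← div_eq_inv_mul,
    div_le_iff₀ (Real.sqrt_pos.2 ha)]
  exact hsb

theorem inv_le_inv_sqrt_mul_inv_sqrt {a b : ℝ} (ha : 0 < a) (hab : a ≤ b) :
    b⁻¹ ≤ (Real.sqrt a)⁻¹ * (Real.sqrt b)⁻¹ := by
  have hb := ha.trans_le hab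
  calc b⁻¹ = (Real.sqrt b)⁻¹ * (Real.sqrt b)⁻¹ := by rw [← mul_inv, Real.mul_self_sqrt hb.le]
    _ ≤ (Real.sqrt a)⁻¹ * (Real.sqrt b)⁻¹ := by gcongr

theorem inv_sqrt_le_of_le_add_two {ρ : ℕ → ℝ} {γ : ℝ} (hρ : ∀ k, 0 < ρ k) (hγ : 1 ≤ γ)
    (hstep : ∀ k, ρ (k + 1) ≤ γ * ρ k) {i k : ℕ} (hik : i ≤ k) (hki : k ≤ i + 2) :
    (Real.sqrt (ρ i))⁻¹ ≤ γ * (Real.sqrt (ρ k))⁻¹ := by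
  refine inv_sqrt_le_mul_inv_sqrt (hρ i) (hρ k) (by linarith) ?_
  have h1 := hstep i
  have h2 : ρ (i + 2) ≤ γ * ρ (i + 1) := hstep (i + 1)
  have := hρ i
  have := hρ (i + 1)
  obtain rfl | rfl | rfl : k = i ∨ k = i + 1 ∨ k = i + 2 := by omega
  all_goals nlinarith

section ADMM

variable {E : Type*} [SeminormedAddCommGroup E] {x v u : ℕ → E}

/-- Each residual is a combination of the proximal displacement `x^(k+1) − (v^(k) − u^(k))`
and the dual variables, since the `u`-update gives `v^(k) = x^(k) + u^(k−1) − u^(k)`. -/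
theorem admm_residual_le (hu : ∀ k, u (k + 1) = u k + (x (k + 1) - v (k + 1))) {k : ℕ}
    (hk : 1 ≤ k) :
    ‖x (k + 1) - x k‖ + ‖v (k + 1) - v k‖ + ‖u (k + 1) - u k‖ ≤
      2 * ‖x (k + 1) - (v k - u k)‖ + ‖u (k - 1)‖ + 3 * ‖u k‖ + 2 * ‖u (k + 1)‖ := by
  obtain ⟨k, rfl⟩ := Nat.exists_eq_add_of_le' hk
  rw [Nat.add_sub_cancel]
  have hx : x (k + 1 + 1) - x (k + 1) =
      (x (k + 1 + 1) - (v (k + 1) - u (k + 1))) + (u k - u (k + 1)) - u (k + 1) := by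
    rw [hu k]; abel
  have hv : v (k + 1 + 1) - v (k + 1) =
      (x (k + 1 + 1) - (v (k + 1) - u (k + 1))) - u (k + 1 + 1) := by
    rw [hu (k + 1)]; abel
  rw [hx, hv]
  set e := x (k + 1 + 1) - (v (k + 1) - u (k + 1))
  linarith [norm_sub_le (e + (u k - u (k + 1))) (u (k + 1)), norm_add_le e (u k - u (k + 1)),
    norm_sub_le (u k) (u (k + 1)), norm_sub_le e (u (k + 1 + 1)),
    norm_sub_le (u (k + 1 + 1)) (u (k + 1))]

theorem norm_admm_dual_le {n : ℕ} {lam C : ℝ} {ρ : ℕ → ℝ} {D : ℝ → E → E} (hlam : 0 < lam)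
    (hρ : ∀ k, 0 < ρ k)
    (hD : ∀ σ : ℝ, 0 < σ → ∀ z : E, ‖D σ z - z‖ ^ 2 ≤ (n : ℝ) * σ ^ 2 * C)
    (hv : ∀ k, v (k + 1) = D (Real.sqrt (lam / ρ k)) (x (k + 1) + u k))
    (hu : ∀ k, u (k + 1) = u k + (x (k + 1) - v (k + 1))) (k : ℕ) :
    ‖u (k + 1)‖ ≤ Real.sqrt n * Real.sqrt (lam * C) / Real.sqrt (ρ k) := by
  have hres : u (k + 1) =
      -(D (Real.sqrt (lam / ρ k)) (x (k + 1) + u k) - (x (k + 1) + u k)) := by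
    rw [hu k, hv k]; abel
  rw [hres, norm_neg]
  exact norm_denoiser_sub_le hlam (hρ k) hD _

end ADMM

theorem plug_and_play_admm_residual_bound_general
    (lam C L γ ρ0 : ℝ) (hlam : 0 < lam) (hγ : 1 < γ) :
    ∃ C' : ℝ, 0 < C' ∧
      ∀ (n : ℕ), 1 ≤ n →
      ∀ f : EuclideanSpace ℝ (Fin n) → ℝ, Differentiable ℝ f →
      (∀ z : EuclideanSpace ℝ (Fin n), ‖gradient f z‖ ≤ L * Real.sqrt n) →
      ∀ D : ℝ → EuclideanSpace ℝ (Fin n) → EuclideanSpace ℝ (Fin n),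
      (∀ σ : ℝ, 0 < σ → ∀ z : EuclideanSpace ℝ (Fin n),
        ‖D σ z - z‖ ^ 2 ≤ (n : ℝ) * σ ^ 2 * C) →
      ∀ ρ : ℕ → ℝ, (∀ k, 0 < ρ k) → ρ 0 = ρ0 → Monotone ρ →
      (∀ k, ρ (k + 1) ≤ γ * ρ k) →
      ∀ x v u : ℕ → EuclideanSpace ℝ (Fin n),
      (∀ k, ∀ z : EuclideanSpace ℝ (Fin n),
        f (x (k + 1)) + ρ k / 2 * ‖x (k + 1) - (v k - u k)‖ ^ 2
          ≤ f z + ρ k / 2 * ‖z - (v k - u k)‖ ^ 2) →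
      (∀ k, v (k + 1) = D (Real.sqrt (lam / ρ k)) (x (k + 1) + u k)) →
      (∀ k, u (k + 1) = u k + (x (k + 1) - v (k + 1))) →
      ∀ k, 2 ≤ k →
        (Real.sqrt n)⁻¹ *
            (‖x (k + 1) - x k‖ + ‖v (k + 1) - v k‖ + ‖u (k + 1) - u k‖)
          ≤ C' / Real.sqrt (ρ k) := by
  set A := Real.sqrt (lam * C)
  set L' := max L 0
  refine ⟨6 * γ * A + 4 * (L' / Real.sqrt ρ0) + 1, by positivity, ?_⟩
  intro n hn f hf hgrad D hD ρ hρ hρ0 hmono hstep x v u hx hv hu k hk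
  subst hρ0
  set r := (Real.sqrt (ρ k))⁻¹
  have hsn : 0 < Real.sqrt n := Real.sqrt_pos.2 (by exact_mod_cast hn)
  have hdual : ∀ j, 1 ≤ j → k ≤ j + 1 → j ≤ k + 1 → ‖u j‖ ≤ Real.sqrt n * A * (γ * r) := by
    intro j hj1 hkj hjk
    obtain ⟨i, rfl⟩ := Nat.exists_eq_add_of_le' hj1
    refine (norm_admm_dual_le hlam hρ hD hv hu i).trans ?_
    rw [div_eq_mul_inv]
    gcongr
    exact inv_sqrt_le_of_le_add_two hρ hγ.le hstep (by omega) (by omega)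
  have hprox : ‖x (k + 1) - (v k - u k)‖ ≤ Real.sqrt n * (2 * (L' / Real.sqrt (ρ 0)) * r) := by
    have hlip := norm_sub_le_of_norm_gradient_le hf
      (fun z => (hgrad z).trans (mul_le_mul_of_nonneg_right (le_max_left L 0) hsn.le))
    refine (norm_prox_sub_le (by positivity) (hρ k) hlip (hx k)).trans ?_
    have hρk := inv_le_inv_sqrt_mul_inv_sqrt (hρ 0) (hmono (Nat.zero_le k))
    rw [div_eq_mul_inv]
    calc _ ≤ 2 * (L' * Real.sqrt n) * ((Real.sqrt (ρ 0))⁻¹ * r) := by gcongr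
      _ = _ := by ring
  have hsum := admm_residual_le hu (k := k) (by omega)
  have hr : 0 ≤ r := by positivity
  rw [div_eq_mul_inv _ (Real.sqrt (ρ k)), inv_mul_le_iff₀ hsn]
  calc _ ≤ Real.sqrt n * ((6 * γ * A + 4 * (L' / Real.sqrt (ρ 0))) * r) := by
        linarith [hdual (k - 1) (by omega) (by omega) (by omega),
          hdual k (by omega) (by omega) (by omega), hdual (k + 1) (by omega) (by omega) le_rfl]
    _ ≤ _ := by linarith [mul_nonneg hsn.le hr]

/-- **Lemma 1 (uniform residual bound).**
For Plug-and-Play ADMM iterates with a nondecreasing parameter sequence satisfying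
`ρ k ≤ γ * ρ (k-1)`, there is a constant `C' > 0` depending only on `λ, C, L, γ, ρ₀`
(in particular independent of `k` and of the dimension `n`) such that
`Δ (k+1) ≤ C'/√(ρ k)` for all `k ≥ 2`, where
`Δ (k+1) = (1/√n)(‖x^(k+1) − x^(k)‖ + ‖v^(k+1) − v^(k)‖ + ‖u^(k+1) − u^(k)‖)`. -/
theorem plug_and_play_admm_residual_bound
    (lam C L γ ρ0 : ℝ) (hlam : 0 < lam) (hC : 0 ≤ C) (hγ : 1 < γ) (hρ0 : 0 < ρ0) :
    ∃ C' : ℝ, 0 < C' ∧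
      ∀ (n : ℕ), 1 ≤ n →
      ∀ f : EuclideanSpace ℝ (Fin n) → ℝ, Differentiable ℝ f →
      (∀ z : EuclideanSpace ℝ (Fin n), ‖gradient f z‖ ≤ L * Real.sqrt n) →
      ∀ D : ℝ → EuclideanSpace ℝ (Fin n) → EuclideanSpace ℝ (Fin n),
      (∀ σ : ℝ, 0 < σ → ∀ z : EuclideanSpace ℝ (Fin n),
        ‖D σ z - z‖ ^ 2 ≤ (n : ℝ) * σ ^ 2 * C) →
      ∀ ρ : ℕ → ℝ, (∀ k, 0 < ρ k) → ρ 0 = ρ0 → Monotone ρ →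
      (∀ k, ρ (k + 1) ≤ γ * ρ k) →
      ∀ x v u : ℕ → EuclideanSpace ℝ (Fin n),
      (∀ k, ∀ z : EuclideanSpace ℝ (Fin n),
        f (x (k + 1)) + ρ k / 2 * ‖x (k + 1) - (v k - u k)‖ ^ 2
          ≤ f z + ρ k / 2 * ‖z - (v k - u k)‖ ^ 2) →
      (∀ k, v (k + 1) = D (Real.sqrt (lam / ρ k)) (x (k + 1) + u k)) →
      (∀ k, u (k + 1) = u k + (x (k + 1) - v (k + 1))) →
      ∀ k, 2 ≤ k →
        (Real.sqrt n)⁻¹ *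
            (‖x (k + 1) - x k‖ + ‖v (k + 1) - v k‖ + ‖u (k + 1) - u k‖)
          ≤ C' / Real.sqrt (ρ k) :=
  plug_and_play_admm_residual_bound_general lam C L γ ρ0 hlam hγ
end

section
/- Let f : ℝ^n → ℝ be differentiable with ‖∇f(x)‖₂ ≤ L√n for all x, let D be a bounded denoiser with constant C ≥ 0, and fix λ > 0, ρ > 0, v, u ∈ ℝ^n. Suppose x⁺ is a global minimizer of x ↦ f(x) + (ρ/2)‖x − (v − u)‖₂² and v⁺ = D_σ(x⁺ + u) with σ = √(λ/ρ). Then ‖v⁺ − v‖₂/√n ≤ √(λC/ρ) + L/ρ. -/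
/-!
The first-order condition at the minimizer reads `∇f(x⁺) + ρ (x⁺ - (v - u)) = 0`, so `x⁺ + u`
lies within `‖∇f(x⁺)‖/ρ ≤ L√n/ρ` of `v`, while the denoiser moves `x⁺ + u` by at most
`√n σ √C = √n √(λC/ρ)`; the triangle inequality combines the two.
-/

section Proximal

variable {E : Type*} [NormedAddCommGroup E] [InnerProductSpace ℝ E] [CompleteSpace E]
  {f : E → ℝ} {g x : E}

theorem IsLocalMin.hasGradientAt_eq_zero (hmin : IsLocalMin f x) (hf : HasGradientAt f g x) :
    g = 0 := by
  rw [hasGradientAt_iff_hasFDerivAt] at hf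
  exact (InnerProductSpace.toDual ℝ E).map_eq_zero_iff.1 (hmin.hasFDerivAt_eq_zero hf)

theorem HasGradientAt.add_half_mul_norm_sub_sq (hf : HasGradientAt f g x) (ρ : ℝ) (b : E) :
    HasGradientAt (fun w => f w + ρ / 2 * ‖w - b‖ ^ 2) (g + ρ • (x - b)) x := by
  rw [hasGradientAt_iff_hasFDerivAt] at hf ⊢
  refine (hf.add (((hasFDerivAt_id x).sub_const b).norm_sq.const_mul (ρ / 2))).congr_fderiv ?_
  ext h
  simp only [id_eq, map_sub, ContinuousLinearMap.comp_id, add_apply,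
    InnerProductSpace.toDual_apply_apply, smul_apply,
    sub_apply, coe_innerSL_apply, nsmul_eq_mul, Nat.cast_ofNat, smul_eq_mul,
    map_add, map_smul, add_right_inj]
  ring

theorem norm_sub_eq_norm_gradient_div_of_isLocalMin {ρ : ℝ} (hρ : 0 < ρ) {b : E}
    (hf : DifferentiableAt ℝ f x) (hmin : IsLocalMin (fun w => f w + ρ / 2 * ‖w - b‖ ^ 2) x) :
    ‖x - b‖ = ‖gradient f x‖ / ρ := by
  have hcrit := hmin.hasGradientAt_eq_zero (hf.hasGradientAt.add_half_mul_norm_sub_sq ρ b)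
  have hnorm : ρ * ‖x - b‖ = ‖gradient f x‖ := by
    rw [← Real.norm_of_nonneg hρ.le, ← norm_smul, eq_neg_of_add_eq_zero_right hcrit, norm_neg]
  rw [eq_div_iff hρ.ne', ← hnorm, mul_comm]

end Proximal

theorem norm_sub_le_sqrt_mul_sqrt_of_sq_le {E : Type*} [SeminormedAddCommGroup E] {y z : E}
    {n lam ρ C : ℝ} (hn : 0 ≤ n) (hlamρ : 0 ≤ lam / ρ)
    (h : ‖y - z‖ ^ 2 ≤ n * Real.sqrt (lam / ρ) ^ 2 * C) :
    ‖y - z‖ ≤ Real.sqrt n * Real.sqrt (lam * C / ρ) := by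
  rw [Real.sq_sqrt hlamρ] at h
  calc ‖y - z‖ = |‖y - z‖| := (abs_norm _).symm
    _ ≤ Real.sqrt (n * (lam / ρ) * C) := Real.abs_le_sqrt h
    _ = Real.sqrt n * Real.sqrt (lam * C / ρ) := by
      rw [← Real.sqrt_mul hn, mul_assoc, div_mul_eq_mul_div]

theorem v_update_bound_general
    (n : ℕ) (hn : 1 ≤ n)
    (f : EuclideanSpace ℝ (Fin n) → ℝ) (L : ℝ)
    (hf : Differentiable ℝ f)
    (hgrad : ∀ z : EuclideanSpace ℝ (Fin n), ‖gradient f z‖ ≤ L * Real.sqrt n)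
    (D : ℝ → EuclideanSpace ℝ (Fin n) → EuclideanSpace ℝ (Fin n)) (C : ℝ)
    (hD : ∀ σ : ℝ, 0 < σ → ∀ z : EuclideanSpace ℝ (Fin n),
      ‖D σ z - z‖ ^ 2 ≤ (n : ℝ) * σ ^ 2 * C)
    (lam ρ : ℝ) (hlam : 0 < lam) (hρ : 0 < ρ)
    (v u xplus vplus : EuclideanSpace ℝ (Fin n))
    (hxplus : ∀ w : EuclideanSpace ℝ (Fin n),
      f xplus + ρ / 2 * ‖xplus - (v - u)‖ ^ 2 ≤ f w + ρ / 2 * ‖w - (v - u)‖ ^ 2)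
    (hvplus : vplus = D (Real.sqrt (lam / ρ)) (xplus + u)) :
    ‖vplus - v‖ / Real.sqrt n ≤ Real.sqrt (lam * C / ρ) + L / ρ := by
  have hsqrt_n : 0 < Real.sqrt n := Real.sqrt_pos.2 (by exact_mod_cast hn)
  have hdenoise : ‖vplus - (xplus + u)‖ ≤ Real.sqrt n * Real.sqrt (lam * C / ρ) := by
    have hσ : 0 < Real.sqrt (lam / ρ) := Real.sqrt_pos.2 (div_pos hlam hρ)
    refine norm_sub_le_sqrt_mul_sqrt_of_sq_le n.cast_nonneg (div_pos hlam hρ).le ?_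
    rw [hvplus]
    exact hD _ hσ _
  have hprox : ‖xplus + u - v‖ ≤ L * Real.sqrt n / ρ := by
    rw [← sub_sub_eq_add_sub,
      norm_sub_eq_norm_gradient_div_of_isLocalMin hρ (hf xplus) (.of_forall hxplus)]
    gcongr
    exact hgrad xplus
  calc ‖vplus - v‖ / Real.sqrt n
      ≤ (‖vplus - (xplus + u)‖ + ‖xplus + u - v‖) / Real.sqrt n := by
        gcongr; exact norm_sub_le_norm_sub_add_norm_sub _ _ _
    _ ≤ (Real.sqrt n * Real.sqrt (lam * C / ρ) + L * Real.sqrt n / ρ) / Real.sqrt n := by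
        gcongr
    _ = Real.sqrt (lam * C / ρ) + L / ρ := by
        field_simp

/-- **One-step bound on the `v`-update.**
If `x⁺` minimizes `x ↦ f(x) + (ρ/2)‖x − (v − u)‖²` and `v⁺ = D_σ(x⁺ + u)` with
`σ = √(λ/ρ)`, then `‖v⁺ − v‖/√n ≤ √(λC/ρ) + L/ρ`. -/
theorem v_update_bound
    (n : ℕ) (hn : 1 ≤ n)
    (f : EuclideanSpace ℝ (Fin n) → ℝ) (L : ℝ)
    (hf : Differentiable ℝ f)
    (hgrad : ∀ z : EuclideanSpace ℝ (Fin n), ‖gradient f z‖ ≤ L * Real.sqrt n)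
    (D : ℝ → EuclideanSpace ℝ (Fin n) → EuclideanSpace ℝ (Fin n)) (C : ℝ)
    (hC : 0 ≤ C)
    (hD : ∀ σ : ℝ, 0 < σ → ∀ z : EuclideanSpace ℝ (Fin n),
      ‖D σ z - z‖ ^ 2 ≤ (n : ℝ) * σ ^ 2 * C)
    (lam ρ : ℝ) (hlam : 0 < lam) (hρ : 0 < ρ)
    (v u xplus vplus : EuclideanSpace ℝ (Fin n))
    (hxplus : ∀ w : EuclideanSpace ℝ (Fin n),
      f xplus + ρ / 2 * ‖xplus - (v - u)‖ ^ 2 ≤ f w + ρ / 2 * ‖w - (v - u)‖ ^ 2)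
    (hvplus : vplus = D (Real.sqrt (lam / ρ)) (xplus + u)) :
    ‖vplus - v‖ / Real.sqrt n ≤ Real.sqrt (lam * C / ρ) + L / ρ :=
  v_update_bound_general n hn f L hf hgrad D C hD lam ρ hlam hρ v u xplus vplus hxplus hvplus
end

section
/- Let x^(k), v^(k), u^(k) be Plug-and-Play ADMM iterates for a differentiable f with gradient bounded by L√n and a bounded denoiser with constant C ≥ 0, with λ > 0 and any positive sequence (ρ_k). Then for every k ≥ 1, ‖u^(k+1) − u^(k)‖₂/√n ≤ √(λC/ρ_k) + √(λC/ρ_{k−1}). -/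
open Filter Topology

/-- **Bound on the dual residual.**
For Plug-and-Play ADMM iterates with any positive sequence `ρ`, for every `k ≥ 1`,
`‖u^(k+1) − u^(k)‖/√n ≤ √(λC/ρ_k) + √(λC/ρ_{k−1})`. -/
theorem plug_and_play_admm_dual_residual_bound
    (n : ℕ) (hn : 1 ≤ n)
    (f : EuclideanSpace ℝ (Fin n) → ℝ) (L : ℝ)
    (hf : Differentiable ℝ f)
    (hgrad : ∀ z : EuclideanSpace ℝ (Fin n), ‖gradient f z‖ ≤ L * Real.sqrt n)
    (D : ℝ → EuclideanSpace ℝ (Fin n) → EuclideanSpace ℝ (Fin n)) (C : ℝ)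
    (hC : 0 ≤ C)
    (hD : ∀ σ : ℝ, 0 < σ → ∀ z : EuclideanSpace ℝ (Fin n),
      ‖D σ z - z‖ ^ 2 ≤ (n : ℝ) * σ ^ 2 * C)
    (lam : ℝ) (hlam : 0 < lam)
    (ρ : ℕ → ℝ) (hρ : ∀ k, 0 < ρ k)
    (x v u : ℕ → EuclideanSpace ℝ (Fin n))
    (hx : ∀ k, ∀ z : EuclideanSpace ℝ (Fin n),
      f (x (k + 1)) + ρ k / 2 * ‖x (k + 1) - (v k - u k)‖ ^ 2
        ≤ f z + ρ k / 2 * ‖z - (v k - u k)‖ ^ 2)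
    (hv : ∀ k, v (k + 1) = D (Real.sqrt (lam / ρ k)) (x (k + 1) + u k))
    (hu : ∀ k, u (k + 1) = u k + (x (k + 1) - v (k + 1))) :
    ∀ k, 1 ≤ k →
      ‖u (k + 1) - u k‖ / Real.sqrt n
        ≤ Real.sqrt (lam * C / ρ k) + Real.sqrt (lam * C / ρ (k - 1)) := by
  have key : ∀ k, ‖u (k + 1)‖ ≤ Real.sqrt n * Real.sqrt (lam * C / ρ k) := by
    intro k
    have hdivpos : 0 < lam / ρ k := div_pos hlam (hρ k)
    have hσ : 0 < Real.sqrt (lam / ρ k) := Real.sqrt_pos.2 hdivpos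
    have hb := hD _ hσ (x (k + 1) + u k)
    rw [Real.sq_sqrt hdivpos.le] at hb
    have heq : u (k + 1)
        = -(D (Real.sqrt (lam / ρ k)) (x (k + 1) + u k) - (x (k + 1) + u k)) := by
      rw [hu, hv]; abel
    have hsq : ‖u (k + 1)‖ ^ 2 ≤ (n : ℝ) * (lam * C / ρ k) := by
      rw [heq, norm_neg]
      calc ‖D (Real.sqrt (lam / ρ k)) (x (k + 1) + u k) - (x (k + 1) + u k)‖ ^ 2
          ≤ (n : ℝ) * (lam / ρ k) * C := hb
        _ = (n : ℝ) * (lam * C / ρ k) := by ring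
    have h1 : ‖u (k + 1)‖ ≤ Real.sqrt ((n : ℝ) * (lam * C / ρ k)) := by
      have := Real.sqrt_le_sqrt hsq
      rwa [Real.sqrt_sq (norm_nonneg _)] at this
    rwa [Real.sqrt_mul (by positivity)] at h1
  intro k hk
  obtain ⟨m, rfl⟩ : ∃ m, k = m + 1 := ⟨k - 1, (Nat.succ_pred_eq_of_pos hk).symm⟩
  have hsn : 0 < Real.sqrt n := Real.sqrt_pos.2 (by exact_mod_cast hn)
  rw [div_le_iff₀ hsn]
  have htri : ‖u (m + 1 + 1) - u (m + 1)‖ ≤ ‖u (m + 1 + 1)‖ + ‖u (m + 1)‖ :=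
    norm_sub_le _ _
  have h2 := key (m + 1)
  have h3 := key m
  simp only [Nat.add_sub_cancel]
  calc ‖u (m + 1 + 1) - u (m + 1)‖ ≤ ‖u (m + 1 + 1)‖ + ‖u (m + 1)‖ := htri
    _ ≤ Real.sqrt n * Real.sqrt (lam * C / ρ (m + 1))
        + Real.sqrt n * Real.sqrt (lam * C / ρ m) := add_le_add h2 h3
    _ = (Real.sqrt (lam * C / ρ (m + 1)) + Real.sqrt (lam * C / ρ m)) * Real.sqrt n := by
        ring
end

section
/- Let x^(k), v^(k), u^(k) be Plug-and-Play ADMM iterates for a differentiable f with gradient bounded by L√n and a bounded denoiser with constant C ≥ 0, where the positive sequence (ρ_k) is nondecreasing and satisfies ρ_k ≤ γ ρ_{k−1} for all k ≥ 1, with ρ_0 > 0 and γ > 1. Then there exists a constant C₁ > 0, depending only on λ, C, L, γ and ρ_0, such that ‖x^(k+1) − x^(k)‖₂/√n ≤ C₁/√ρ_k for all k ≥ 2. -/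
open Filter Topology

set_option maxHeartbeats 1000000 in
/-- **Bound on successive `x`-iterates.**
For Plug-and-Play ADMM iterates with a nondecreasing parameter sequence satisfying
`ρ k ≤ γ * ρ (k-1)`, there is a constant `C₁ > 0` depending only on `λ, C, L, γ, ρ₀`
such that `‖x^(k+1) − x^(k)‖/√n ≤ C₁/√(ρ k)` for all `k ≥ 2`. -/
theorem plug_and_play_admm_x_residual_bound
    (lam C L γ ρ0 : ℝ) (hlam : 0 < lam) (hC : 0 ≤ C) (hγ : 1 < γ) (hρ0 : 0 < ρ0) :
    ∃ C₁ : ℝ, 0 < C₁ ∧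
      ∀ (n : ℕ), 1 ≤ n →
      ∀ f : EuclideanSpace ℝ (Fin n) → ℝ, Differentiable ℝ f →
      (∀ z : EuclideanSpace ℝ (Fin n), ‖gradient f z‖ ≤ L * Real.sqrt n) →
      ∀ D : ℝ → EuclideanSpace ℝ (Fin n) → EuclideanSpace ℝ (Fin n),
      (∀ σ : ℝ, 0 < σ → ∀ z : EuclideanSpace ℝ (Fin n),
        ‖D σ z - z‖ ^ 2 ≤ (n : ℝ) * σ ^ 2 * C) →
      ∀ ρ : ℕ → ℝ, (∀ k, 0 < ρ k) → ρ 0 = ρ0 → Monotone ρ →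
      (∀ k, ρ (k + 1) ≤ γ * ρ k) →
      ∀ x v u : ℕ → EuclideanSpace ℝ (Fin n),
      (∀ k, ∀ z : EuclideanSpace ℝ (Fin n),
        f (x (k + 1)) + ρ k / 2 * ‖x (k + 1) - (v k - u k)‖ ^ 2
          ≤ f z + ρ k / 2 * ‖z - (v k - u k)‖ ^ 2) →
      (∀ k, v (k + 1) = D (Real.sqrt (lam / ρ k)) (x (k + 1) + u k)) →
      (∀ k, u (k + 1) = u k + (x (k + 1) - v (k + 1))) →
      ∀ k, 2 ≤ k →
        ‖x (k + 1) - x k‖ / Real.sqrt n ≤ C₁ / Real.sqrt (ρ k) := by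
  have hγ0 : (0:ℝ) < γ := lt_trans one_pos hγ
  set B : ℝ := 2 * |L| / Real.sqrt ρ0 + 3 * γ * Real.sqrt (lam * C) with hB
  have hBnn : 0 ≤ B := by positivity
  refine ⟨B + 1, by positivity, ?_⟩
  intro n hn f hf hgrad D hD ρ hρ hρinit hmono hργ x v u hmin hv hu k hk
  have hρk := hρ k
  have hsρk : (0:ℝ) < Real.sqrt (ρ k) := Real.sqrt_pos.2 hρk
  have hsn : (0:ℝ) < Real.sqrt n := Real.sqrt_pos.2 (by exact_mod_cast hn)
  -- L is nonnegative
  have hL0 : 0 ≤ L := by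
    have h0 := hgrad 0
    nlinarith [norm_nonneg (gradient f 0), hsn]
  set M : ℝ := L * Real.sqrt n with hM
  have hM0 : 0 ≤ M := by positivity
  -- Lipschitz bound from gradient bound
  have hlip : ∀ a b : EuclideanSpace ℝ (Fin n), f a - f b ≤ M * ‖a - b‖ := by
    intro a b
    have hb : ∀ z ∈ (Set.univ : Set (EuclideanSpace ℝ (Fin n))), ‖fderiv ℝ f z‖ ≤ M := by
      intro z _
      have : ‖fderiv ℝ f z‖ = ‖gradient f z‖ := by
        rw [gradient, LinearIsometryEquiv.norm_map]
      rw [this]; exact hgrad z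
    have := Convex.norm_image_sub_le_of_norm_fderiv_le
      (fun z _ => (hf z)) hb convex_univ (Set.mem_univ b) (Set.mem_univ a)
    calc f a - f b ≤ |f a - f b| := le_abs_self _
      _ = ‖f a - f b‖ := (Real.norm_eq_abs _).symm
      _ ≤ M * ‖a - b‖ := this
  -- bound on ‖x (k+1) - (v k - u k)‖
  have hx : ∀ j, ‖x (j + 1) - (v j - u j)‖ ≤ 2 * M / ρ j := by
    intro j
    set d := ‖x (j + 1) - (v j - u j)‖ with hd
    have hd0 : 0 ≤ d := norm_nonneg _
    have h1 := hmin j (v j - u j)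
    rw [sub_self, norm_zero] at h1
    have h2 : ρ j / 2 * d ^ 2 ≤ f (v j - u j) - f (x (j + 1)) := by nlinarith
    have h3 : f (v j - u j) - f (x (j + 1)) ≤ M * d := by
      have := hlip (v j - u j) (x (j + 1))
      rwa [norm_sub_rev] at this
    rw [le_div_iff₀ (hρ j)]
    rcases eq_or_lt_of_le hd0 with h | h
    · rw [← h]; nlinarith
    · nlinarith
  -- bound on ‖u (j+1)‖
  have hub : ∀ j, ‖u (j + 1)‖ ≤ Real.sqrt n * Real.sqrt (lam * C) / Real.sqrt (ρ j) := by
    intro j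
    have hσ : (0:ℝ) < Real.sqrt (lam / ρ j) :=
      Real.sqrt_pos.2 (div_pos hlam (hρ j))
    have hDj := hD _ hσ (x (j + 1) + u j)
    rw [← hv j] at hDj
    have hue : u (j + 1) = -(v (j + 1) - (x (j + 1) + u j)) := by
      rw [hu j]; abel
    have hsq : Real.sqrt (lam / ρ j) ^ 2 = lam / ρ j :=
      Real.sq_sqrt (le_of_lt (div_pos hlam (hρ j)))
    have h1 : ‖u (j + 1)‖ ^ 2 ≤ (n : ℝ) * (lam * C) / ρ j := by
      rw [hue, norm_neg]
      calc ‖v (j + 1) - (x (j + 1) + u j)‖ ^ 2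
          ≤ (n : ℝ) * Real.sqrt (lam / ρ j) ^ 2 * C := hDj
        _ = (n : ℝ) * (lam * C) / ρ j := by rw [hsq]; field_simp
    have h2 : ‖u (j + 1)‖ ≤ Real.sqrt ((n : ℝ) * (lam * C) / ρ j) :=
      (Real.le_sqrt (norm_nonneg _) (by have := hρ j; positivity)).2 h1
    calc ‖u (j + 1)‖ ≤ Real.sqrt ((n : ℝ) * (lam * C) / ρ j) := h2
      _ = Real.sqrt n * Real.sqrt (lam * C) / Real.sqrt (ρ j) := by
          rw [Real.sqrt_div (by positivity), Real.sqrt_mul (by positivity)]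
  -- decompose k = j + 2
  obtain ⟨j, rfl⟩ : ∃ j, k = j + 2 := ⟨k - 2, by omega⟩
  set sc := Real.sqrt (lam * C) with hsc
  have hsc0 : 0 ≤ sc := Real.sqrt_nonneg _
  have haj : (0:ℝ) < Real.sqrt (ρ j) := Real.sqrt_pos.2 (hρ j)
  have ha1 : (0:ℝ) < Real.sqrt (ρ (j + 1)) := Real.sqrt_pos.2 (hρ (j + 1))
  have ha0 : (0:ℝ) < Real.sqrt ρ0 := Real.sqrt_pos.2 hρ0
  -- sqrt comparisons
  have hs2j : Real.sqrt (ρ (j + 2)) ≤ γ * Real.sqrt (ρ j) := by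
    have h : ρ (j + 2) ≤ γ ^ 2 * ρ j := by
      have h1 := hργ (j + 1); have h2 := hργ j
      nlinarith [hρ j, hρ (j + 1)]
    calc Real.sqrt (ρ (j + 2)) ≤ Real.sqrt (γ ^ 2 * ρ j) := Real.sqrt_le_sqrt h
      _ = γ * Real.sqrt (ρ j) := by
        rw [Real.sqrt_mul (by positivity), Real.sqrt_sq hγ0.le]
  have hs21 : Real.sqrt (ρ (j + 2)) ≤ γ * Real.sqrt (ρ (j + 1)) := by
    have h : ρ (j + 2) ≤ γ ^ 2 * ρ (j + 1) := by
      have h1 := hργ (j + 1)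
      nlinarith [hρ (j + 1)]
    calc Real.sqrt (ρ (j + 2)) ≤ Real.sqrt (γ ^ 2 * ρ (j + 1)) := Real.sqrt_le_sqrt h
      _ = γ * Real.sqrt (ρ (j + 1)) := by
        rw [Real.sqrt_mul (by positivity), Real.sqrt_sq hγ0.le]
  have hs02 : Real.sqrt ρ0 ≤ Real.sqrt (ρ (j + 2)) := by
    apply Real.sqrt_le_sqrt
    rw [← hρinit]; exact hmono (Nat.zero_le _)
  -- algebraic identity
  have key : x (j + 2 + 1) - x (j + 2)
      = (x (j + 2 + 1) - (v (j + 2) - u (j + 2))) + (u (j + 1) - (2:ℝ) • u (j + 2)) := by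
    have h := hu (j + 1)
    rw [h]; module
  -- norm bound
  have hnorm : ‖x (j + 2 + 1) - x (j + 2)‖
      ≤ 2 * M / ρ (j + 2) + ‖u (j + 1)‖ + 2 * ‖u (j + 2)‖ := by
    rw [key]
    calc ‖(x (j + 2 + 1) - (v (j + 2) - u (j + 2))) + (u (j + 1) - (2:ℝ) • u (j + 2))‖
        ≤ ‖x (j + 2 + 1) - (v (j + 2) - u (j + 2))‖ + ‖u (j + 1) - (2:ℝ) • u (j + 2)‖ :=
          norm_add_le _ _
      _ ≤ ‖x (j + 2 + 1) - (v (j + 2) - u (j + 2))‖ + (‖u (j + 1)‖ + 2 * ‖u (j + 2)‖) := by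
          have := norm_sub_le (u (j + 1)) ((2:ℝ) • u (j + 2))
          rw [norm_smul] at this
          simp only [Real.norm_ofNat] at this
          linarith
      _ ≤ 2 * M / ρ (j + 2) + ‖u (j + 1)‖ + 2 * ‖u (j + 2)‖ := by
          have := hx (j + 2); linarith
  -- bound each term by (· ) * √n / √(ρ (j+2))
  have hT1 : 2 * M / ρ (j + 2) ≤ (2 * |L| / Real.sqrt ρ0) * Real.sqrt n / Real.sqrt (ρ (j + 2)) := by
    have hsq : Real.sqrt (ρ (j + 2)) * Real.sqrt (ρ (j + 2)) = ρ (j + 2) :=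
      Real.mul_self_sqrt (hρ (j + 2)).le
    have heq : (2 * |L| / Real.sqrt ρ0) * Real.sqrt n / Real.sqrt (ρ (j + 2))
        = 2 * |L| * Real.sqrt n / (Real.sqrt ρ0 * Real.sqrt (ρ (j + 2))) := by ring
    rw [heq, hM]
    apply div_le_div₀ (by positivity)
    · nlinarith [le_abs_self L, hsn.le]
    · positivity
    · nlinarith [hs02, ha0.le, hsρk.le]
  have hT2 : ‖u (j + 1)‖ ≤ (γ * sc) * Real.sqrt n / Real.sqrt (ρ (j + 2)) := by
    calc ‖u (j + 1)‖ ≤ Real.sqrt n * sc / Real.sqrt (ρ j) := hub j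
      _ ≤ (γ * sc) * Real.sqrt n / Real.sqrt (ρ (j + 2)) := by
        rw [div_le_div_iff₀ haj hsρk]
        nlinarith [mul_le_mul_of_nonneg_left hs2j (mul_nonneg hsc0 hsn.le)]
  have hT3 : ‖u (j + 2)‖ ≤ (γ * sc) * Real.sqrt n / Real.sqrt (ρ (j + 2)) := by
    calc ‖u (j + 2)‖ ≤ Real.sqrt n * sc / Real.sqrt (ρ (j + 1)) := hub (j + 1)
      _ ≤ (γ * sc) * Real.sqrt n / Real.sqrt (ρ (j + 2)) := by
        rw [div_le_div_iff₀ ha1 hsρk]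
        nlinarith [mul_le_mul_of_nonneg_left hs21 (mul_nonneg hsc0 hsn.le)]
  have htot : ‖x (j + 2 + 1) - x (j + 2)‖ ≤ B * Real.sqrt n / Real.sqrt (ρ (j + 2)) := by
    have : B * Real.sqrt n / Real.sqrt (ρ (j + 2))
        = (2 * |L| / Real.sqrt ρ0) * Real.sqrt n / Real.sqrt (ρ (j + 2))
          + (γ * sc) * Real.sqrt n / Real.sqrt (ρ (j + 2))
          + 2 * ((γ * sc) * Real.sqrt n / Real.sqrt (ρ (j + 2))) := by
      rw [hB]; field_simp; ring
    rw [this]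
    linarith
  -- conclude
  calc ‖x (j + 2 + 1) - x (j + 2)‖ / Real.sqrt n
      ≤ (B * Real.sqrt n / Real.sqrt (ρ (j + 2))) / Real.sqrt n := by gcongr
    _ = B / Real.sqrt (ρ (j + 2)) := by
        rw [div_div, mul_comm (Real.sqrt (ρ (j + 2))) (Real.sqrt n), ← div_div,
          mul_div_assoc, div_self hsn.ne', mul_one]
    _ ≤ (B + 1) / Real.sqrt (ρ (j + 2)) := by gcongr <;> linarith
end

section
/- Let (Δ_k)_{k≥0} be a sequence of nonnegative reals and (ρ_k)_{k≥0} a sequence of positive reals, and let γ > 1, 0 ≤ η < 1 and C' > 0 be constants. Assume that for every k: ρ_{k+1} ∈ {ρ_k, γ ρ_k} and Δ_{k+1} ≤ C'/√ρ_k. Assume furthermore that either (i) there exists K such that ρ_{k+1} = γ ρ_k for all k ≥ K, or (ii) there exists K such that Δ_{k+1} ≤ η Δ_k for all k ≥ K. Then there exist a constant C'' > 0 and δ with 0 < δ < 1 such that Δ_{k+1} ≤ C'' δ^k for all k ≥ 0. -/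
open Filter Topology

lemma pad_tail (Δ : ℕ → ℝ) (hΔ : ∀ k, 0 ≤ Δ k) (δ c : ℝ) (hδ0 : 0 < δ) (hδ1 : δ < 1)
    (hc : 0 < c) (K : ℕ) (h : ∀ k ≥ K, Δ (k + 1) ≤ c * δ ^ k) :
    ∃ C'' : ℝ, 0 < C'' ∧ ∀ k, Δ (k + 1) ≤ C'' * δ ^ k := by
  set S : ℝ := ∑ j ∈ Finset.range K, Δ (j + 1) / δ ^ j with hS
  have hSnn : 0 ≤ S := Finset.sum_nonneg fun j _ => div_nonneg (hΔ _) (pow_nonneg hδ0.le _)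
  refine ⟨c + S, by linarith, fun k => ?_⟩
  rcases le_or_gt K k with hk | hk
  · have := h k hk
    have hδk : 0 ≤ δ ^ k := pow_nonneg hδ0.le _
    nlinarith
  · have hmem : k ∈ Finset.range K := Finset.mem_range.mpr hk
    have hle : Δ (k + 1) / δ ^ k ≤ S :=
      Finset.single_le_sum (f := fun j => Δ (j + 1) / δ ^ j)
        (fun j _ => div_nonneg (hΔ _) (pow_nonneg hδ0.le _)) hmem
    have hδk : 0 < δ ^ k := pow_pos hδ0 _
    calc Δ (k + 1) = (Δ (k + 1) / δ ^ k) * δ ^ k := by field_simp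
    _ ≤ S * δ ^ k := by nlinarith
    _ ≤ (c + S) * δ ^ k := by nlinarith

/-- **Lemma 2 (geometric decay of the residuals).**
If at each step `ρ (k+1) ∈ {ρ k, γ * ρ k}` and `Δ (k+1) ≤ C'/√(ρ k)`, and eventually
either always `ρ (k+1) = γ * ρ k` or always `Δ (k+1) ≤ η * Δ k`, then there are
`C'' > 0` and `0 < δ < 1` with `Δ (k+1) ≤ C'' * δ^k` for all `k`. -/
theorem residual_geometric_decay
    (Δ ρ : ℕ → ℝ) (hΔ : ∀ k, 0 ≤ Δ k) (hρ : ∀ k, 0 < ρ k)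
    (γ η C' : ℝ) (hγ : 1 < γ) (hη0 : 0 ≤ η) (hη1 : η < 1) (hC' : 0 < C')
    (hstep : ∀ k, ρ (k + 1) = ρ k ∨ ρ (k + 1) = γ * ρ k)
    (hbound : ∀ k, Δ (k + 1) ≤ C' / Real.sqrt (ρ k))
    (hcase : (∃ K, ∀ k ≥ K, ρ (k + 1) = γ * ρ k) ∨ (∃ K, ∀ k ≥ K, Δ (k + 1) ≤ η * Δ k)) :
    ∃ C'' δ : ℝ, 0 < C'' ∧ 0 < δ ∧ δ < 1 ∧ ∀ k, Δ (k + 1) ≤ C'' * δ ^ k := by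
  rcases hcase with ⟨K, hK⟩ | ⟨K, hK⟩
  · -- case (i)
    have hγ0 : (0:ℝ) < γ := lt_trans one_pos hγ
    have hsγ : 1 < Real.sqrt γ := by
      rw [show (1:ℝ) = Real.sqrt 1 by simp]
      exact Real.sqrt_lt_sqrt one_pos.le hγ
    have hsγ0 : 0 < Real.sqrt γ := lt_trans one_pos hsγ
    set δ : ℝ := (Real.sqrt γ)⁻¹ with hδ
    have hδ0 : 0 < δ := inv_pos.mpr hsγ0
    have hδ1 : δ < 1 := by
      rw [hδ, inv_lt_one_iff₀]; right; exact hsγ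
    -- ρ k = ρ K * γ ^ (k - K) for k ≥ K
    have hρk : ∀ k ≥ K, ρ k = ρ K * γ ^ (k - K) := by
      intro k hk
      induction k, hk using Nat.le_induction with
      | base => simp
      | succ n hn ih =>
        rw [hK n hn, ih, Nat.succ_sub hn, pow_succ]
        ring
    have hρK := hρ K
    set c : ℝ := C' * (Real.sqrt γ) ^ K / Real.sqrt (ρ K) with hc
    have hsρK : 0 < Real.sqrt (ρ K) := Real.sqrt_pos.mpr hρK
    have hcpos : 0 < c := div_pos (mul_pos hC' (pow_pos hsγ0 _)) hsρK
    have htail : ∀ k ≥ K, Δ (k + 1) ≤ c * δ ^ k := by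
      intro k hk
      have hsp : ∀ n : ℕ, Real.sqrt (γ ^ n) = (Real.sqrt γ) ^ n := by
        intro n
        induction n with
        | zero => simp
        | succ m ih => rw [pow_succ, Real.sqrt_mul (pow_nonneg hγ0.le m), ih, pow_succ]
      have h1 : Real.sqrt (ρ k) = Real.sqrt (ρ K) * (Real.sqrt γ) ^ (k - K) := by
        rw [hρk k hk, Real.sqrt_mul hρK.le, hsp]
      have h2 : c * δ ^ k = C' / Real.sqrt (ρ k) := by
        have hkk : (Real.sqrt γ) ^ k = (Real.sqrt γ) ^ K * (Real.sqrt γ) ^ (k - K) := by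
          rw [← pow_add]; congr 1; omega
        rw [h1, hc, hδ, inv_pow]
        field_simp
        rw [hkk]
      rw [h2]
      exact hbound k
    obtain ⟨C'', hC''pos, hC''⟩ := pad_tail Δ hΔ δ c hδ0 hδ1 hcpos K htail
    exact ⟨C'', δ, hC''pos, hδ0, hδ1, hC''⟩
  · -- case (ii)
    set δ : ℝ := max η (1/2) with hδ
    have hδ0 : 0 < δ := lt_of_lt_of_le (by norm_num) (le_max_right _ _)
    have hδ1 : δ < 1 := max_lt hη1 (by norm_num)
    have hdecay : ∀ k ≥ K, Δ k ≤ Δ K * δ ^ (k - K) := by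
      intro k hk
      induction k, hk using Nat.le_induction with
      | base => simp
      | succ n hn ih =>
        have h1 : Δ (n + 1) ≤ η * Δ n := hK n hn
        have h2 : η * Δ n ≤ δ * Δ n := mul_le_mul_of_nonneg_right (le_max_left _ _) (hΔ n)
        have h3 : δ * Δ n ≤ δ * (Δ K * δ ^ (n - K)) := mul_le_mul_of_nonneg_left ih hδ0.le
        rw [Nat.succ_sub hn, pow_succ]
        calc Δ (n + 1) ≤ δ * (Δ K * δ ^ (n - K)) := le_trans h1 (le_trans h2 h3)
        _ = Δ K * (δ ^ (n - K) * δ) := by ring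
    set c : ℝ := (Δ K + 1) / δ ^ K with hc
    have hcpos : 0 < c := div_pos (by linarith [hΔ K]) (pow_pos hδ0 _)
    have htail : ∀ k ≥ K, Δ (k + 1) ≤ c * δ ^ k := by
      intro k hk
      have h1 : Δ (k + 1) ≤ Δ K * δ ^ (k + 1 - K) := hdecay (k + 1) (le_trans hk (Nat.le_succ k))
      have h2 : δ ^ (k + 1 - K) ≤ δ ^ (k - K) := by
        apply pow_le_pow_of_le_one hδ0.le hδ1.le
        omega
      have h3 : Δ K * δ ^ (k + 1 - K) ≤ Δ K * δ ^ (k - K) :=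
        mul_le_mul_of_nonneg_left h2 (hΔ K)
      have h4 : c * δ ^ k = (Δ K + 1) * δ ^ (k - K) := by
        rw [hc, div_mul_eq_mul_div, mul_div_assoc]
        congr 1
        rw [eq_comm, eq_div_iff (by positivity), ← pow_add]
        congr 1
        omega
      rw [h4]
      have h5 : Δ K * δ ^ (k - K) ≤ (Δ K + 1) * δ ^ (k - K) := by
        apply mul_le_mul_of_nonneg_right (by linarith) (pow_nonneg hδ0.le _)
      linarith
    obtain ⟨C'', hC''pos, hC''⟩ := pad_tail Δ hΔ δ c hδ0 hδ1 hcpos K htail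
    exact ⟨C'', δ, hC''pos, hδ0, hδ1, hC''⟩
end

section
/- Let (Δ_k)_{k≥0} be a sequence of nonnegative reals and (ρ_k)_{k≥0} a sequence of positive reals, and let γ > 1, 0 ≤ η < 1 and C' > 0 be constants. Assume that for every k: Δ_{k+1} ≤ C'/√ρ_k, and the update rule holds: if Δ_{k+1} ≥ η Δ_k then ρ_{k+1} = γ ρ_k, while if Δ_{k+1} < η Δ_k then ρ_{k+1} = ρ_k. Then Δ_k → 0 as k → ∞. -/
open Filter Topology

/-- **Convergence of the residuals under the adaptive update rule.**
If `Δ (k+1) ≤ C'/√(ρ k)` for all `k`, and the adaptive rule holds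
(`Δ (k+1) ≥ η Δ k` forces `ρ (k+1) = γ ρ k`, while `Δ (k+1) < η Δ k` forces
`ρ (k+1) = ρ k`), then `Δ k → 0`. -/
theorem residual_tendsto_zero_adaptive
    (Δ ρ : ℕ → ℝ) (hΔ : ∀ k, 0 ≤ Δ k) (hρ : ∀ k, 0 < ρ k)
    (γ η C' : ℝ) (hγ : 1 < γ) (hη0 : 0 ≤ η) (hη1 : η < 1) (hC' : 0 < C')
    (hbound : ∀ k, Δ (k + 1) ≤ C' / Real.sqrt (ρ k))
    (hrule : ∀ k, (η * Δ k ≤ Δ (k + 1) → ρ (k + 1) = γ * ρ k) ∧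
                  (Δ (k + 1) < η * Δ k → ρ (k + 1) = ρ k)) :
    Tendsto Δ atTop (𝓝 0) := by
  have hmono : Monotone ρ := monotone_nat_of_le_succ (fun k => by
    rcases le_or_gt (η * Δ k) (Δ (k + 1)) with h | h
    · rw [(hrule k).1 h]; nlinarith [hρ k]
    · rw [(hrule k).2 h])
  by_cases hS : {k | η * Δ k ≤ Δ (k + 1)}.Infinite
  · have hgrow : ∀ n : ℕ, ∃ k, γ ^ n * ρ 0 ≤ ρ k := by
      intro n
      induction n with
      | zero => exact ⟨0, by simp⟩
      | succ n ih =>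
        obtain ⟨k, hk⟩ := ih
        obtain ⟨m, hm, hkm⟩ := hS.exists_gt k
        refine ⟨m + 1, ?_⟩
        rw [(hrule m).1 hm]
        have h1 : ρ k ≤ ρ m := hmono hkm.le
        have h2 : 0 < γ ^ n * ρ 0 := mul_pos (pow_pos (by linarith) n) (hρ 0)
        calc γ ^ (n + 1) * ρ 0 = γ * (γ ^ n * ρ 0) := by ring
          _ ≤ γ * ρ m := by nlinarith
    have hρtop : Tendsto ρ atTop atTop := by
      apply hmono.tendsto_atTop_atTop
      intro b
      obtain ⟨n, hn⟩ :=
        ((tendsto_pow_atTop_atTop_of_one_lt hγ).eventually_ge_atTop (b / ρ 0)).exists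
      obtain ⟨k, hk⟩ := hgrow n
      refine ⟨k, le_trans ?_ hk⟩
      rw [div_le_iff₀ (hρ 0)] at hn
      linarith
    have hsqrt : Tendsto Real.sqrt atTop atTop := by
      apply tendsto_atTop_atTop_of_monotone (fun a b h => Real.sqrt_le_sqrt h)
      intro b
      exact ⟨(max b 0) ^ 2, by
        rw [Real.sqrt_sq (le_max_right b 0)]; exact le_max_left b 0⟩
    have hsq : Tendsto (fun k => C' / Real.sqrt (ρ k)) atTop (𝓝 0) :=
      tendsto_const_nhds.div_atTop (hsqrt.comp hρtop)
    have h1 : Tendsto (fun k => Δ (k + 1)) atTop (𝓝 0) :=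
      squeeze_zero (fun k => hΔ (k + 1)) (fun k => hbound k) hsq
    exact (tendsto_add_atTop_iff_nat 1).mp h1
  · rw [Set.not_infinite] at hS
    obtain ⟨N, hN⟩ := hS.bddAbove
    have hdec : ∀ k, N + 1 ≤ k → Δ (k + 1) < η * Δ k := by
      intro k hk
      by_contra h
      push_neg at h
      have : k ∈ {k | η * Δ k ≤ Δ (k + 1)} := h
      have := hN this
      omega
    have key : ∀ n : ℕ, Δ (n + (N + 1)) ≤ η ^ n * Δ (N + 1) := by
      intro n
      induction n with
      | zero => simp
      | succ n ih =>
        have h1 : Δ (n + (N + 1) + 1) < η * Δ (n + (N + 1)) :=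
          hdec _ (by omega)
        have h2 : η * Δ (n + (N + 1)) ≤ η * (η ^ n * Δ (N + 1)) :=
          mul_le_mul_of_nonneg_left ih hη0
        calc Δ (n + 1 + (N + 1)) = Δ (n + (N + 1) + 1) := by ring_nf
          _ ≤ η * (η ^ n * Δ (N + 1)) := le_trans h1.le h2
          _ = η ^ (n + 1) * Δ (N + 1) := by ring
    have hηlim : Tendsto (fun n : ℕ => η ^ n * Δ (N + 1)) atTop (𝓝 0) := by
      have := (tendsto_pow_atTop_nhds_zero_of_lt_one hη0 hη1).mul_const (Δ (N + 1))
      simpa using this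
    have h0 : Tendsto (fun n => Δ (n + (N + 1))) atTop (𝓝 0) :=
      squeeze_zero (fun n => hΔ _) key hηlim
    exact (tendsto_add_atTop_iff_nat (N + 1)).mp h0
end
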